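/- arXiv:2512.13341 — 5 statements merged into one kernel-verified Lean document; each statement's English description precedes it below -/
import Mathlib

section
/- A binary subshift (X,σ) is non-tame (i.e. the cardinality of its Ellis semigroup E(X) is strictly greater than 2^ℵ₀) if and only if X admits an uncountable choice domain. -/
open Filter Topology

noncomputable section

abbrev BinSeq : Type := ℕ → Bool

/-- The left shift on `{0,1}^ℕ`. -/
def binShift (x : BinSeq) : BinSeq := fun n => x (n + 1)

/-- A binary subshift: a nonempty closed shift-invariant subset of `{0,1}^ℕ`. -/
structure BinarySubshift where
  carrier : Set BinSeq
  nonempty : carrier.Nonempty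
  isClosed : IsClosed carrier
  shift_mem : ∀ x ∈ carrier, binShift x ∈ carrier

namespace BinarySubshift

variable (X : BinarySubshift)

/-- The shift map restricted to the subshift. -/
def S : X.carrier → X.carrier := fun x => ⟨binShift x, X.shift_mem x x.2⟩

/-- The (forward) Ellis semigroup `E(X)`: the closure of `{σⁿ : n ≥ 1}` in `X^X`. -/
def Ellis : Set (X.carrier → X.carrier) := closure (Set.range fun n : ℕ => X.S^[n + 1])

/-- `(X,σ)` is non-tame if `|E(X)| > 2^ℵ₀`. -/
def NonTame : Prop := Cardinal.continuum < Cardinal.mk ↥X.Ellis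

end BinarySubshift

/-- `𝒯` is a choice domain: for all `m, n`, any `n` distinct points of `𝒯` and any
choice functions `φ¹,…,φⁿ ∈ {0,1}^m` there are times `m < τ₁ < … < τ_m` realising
the prescribed values. -/
def IsChoiceDomain (𝒯 : Set BinSeq) : Prop :=
  ∀ (m n : ℕ) (x : Fin n → BinSeq), (∀ i, x i ∈ 𝒯) → Function.Injective x →
    ∀ φ : Fin n → Fin m → Bool, ∃ τ : Fin m → ℕ,
      StrictMono τ ∧ (∀ k, m < τ k) ∧ ∀ i k, x i (τ k) = φ i k

/-- `J` is an independence set for the pair `(A0, A1)` in `C`. -/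
def IsIndependenceSet (C A0 A1 : Set BinSeq) (J : Set ℕ) : Prop :=
  ∀ I : Finset ℕ, ↑I ⊆ J → ∀ φ : ℕ → Bool, ∃ x ∈ C, ∀ i ∈ I,
    binShift^[i] x ∈ (if φ i = true then A1 else A0)

/-!
Both sides are equivalent to `X` *shattering* an increasing sequence of times `t`: every finite
0-1 pattern occurs along `t` in some point of `X`.

If `X` shatters `t`, then by compactness every infinite pattern occurs along `t` too. Hence
every ultrafilter `p` on `ℕ` yields its own element `p-lim σ^(t k)` of `E(X)`, and
`|E(X)| ≥ |βℕ| = 2^𝔠`; and the points realising along `t` the members of an independent family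
of `𝔠` subsets of `ℕ` form an uncountable choice domain.

Conversely, `t` is built one time at a time, keeping every cylinder over the times chosen so far
"large". For a choice domain `𝒯`, large means meeting `𝒯` in an uncountable set: a condensation
argument leaves in each cylinder two points whose fibres over every time are all uncountable, and
the choice property splits them. If `X` is non-tame, `u ↦ (x ↦ (u x) 0)` embeds `E(X)` into the
pointwise closure of the coordinate maps `x ↦ x (n + 1)`. Fragmented functions are Borel, so
there are only `𝔠` of them, and some `g` in that closure takes both values on every relatively
open piece of some set `P`. Large then means meeting `P`, and the next time is a coordinate that
agrees with `g` on finitely many witnesses.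
-/

open Set Function
open scoped Cardinal

def IsIndependentFamily {ι α : Type*} (Y : ι → Set α) : Prop :=
  ∀ (s : Finset ι) (c : Set ι), {k | ∀ i ∈ s, k ∈ Y i ↔ i ∈ c}.Infinite

theorem IsIndependentFamily.injective {ι α : Type*} {Y : ι → Set α}
    (hY : IsIndependentFamily Y) : Injective Y := by
  classical
  intro i j hij
  by_contra hne
  obtain ⟨k, hk⟩ := (hY {i, j} {i}).nonempty
  have hki : k ∈ Y i := (hk i (by simp)).2 rfl
  exact hne ((hk j (by simp)).1 (hij ▸ hki)).symm

theorem IsIndependentFamily.two_power_le_mk_ultrafilter {ι α : Type u} {Y : ι → Set α}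
    (hY : IsIndependentFamily Y) : 2 ^ #ι ≤ #(Ultrafilter α) := by
  classical
  let signed (c : Set ι) (i : ι) : Set α := if i ∈ c then Y i else (Y i)ᶜ
  have hfip (c : Set ι) : ∃ p : Ultrafilter α, range (signed c) ⊆ p.sets := by
    refine Ultrafilter.exists_ultrafilter_of_finite_inter_nonempty _ fun T hT => ?_
    obtain ⟨s, -, rfl⟩ := Finset.subset_set_image_iff.1 (image_univ (f := signed c) ▸ hT)
    obtain ⟨k, hk⟩ := (hY s c).nonempty
    refine ⟨k, mem_sInter.2 ?_⟩
    simp only [Finset.coe_image, mem_image, Finset.mem_coe]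
    rintro _ ⟨i, hi, rfl⟩
    by_cases hic : i ∈ c <;> simp [signed, hic, hk i hi]
  choose p hp using hfip
  have hmem (c : Set ι) (i : ι) : i ∈ c ↔ Y i ∈ p c := by
    have := hp c (mem_range_self i)
    by_cases hic : i ∈ c
    · simpa [signed, hic] using this
    · simpa [signed, hic, Ultrafilter.compl_mem_iff_notMem] using this
  rw [← Cardinal.mk_set]
  refine Cardinal.mk_le_of_injective (f := p) fun c c' hcc' => ?_
  ext i
  rw [hmem c, hmem c', hcc']

theorem exists_isIndependentFamily_nat : ∃ Y : (ℕ → Bool) → Set ℕ, IsIndependentFamily Y := by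
  classical
  let pre (n : ℕ) (a : ℕ → Bool) : List Bool := (List.range n).map a
  refine ⟨fun a => Encodable.encode '' {c : ℕ × Finset (List Bool) | pre c.1 a ∈ c.2}, ?_⟩
  intro s c
  let Separating (n : ℕ) : Prop := ∀ a ∈ s, ∀ b ∈ s, pre n a = pre n b → a = b
  have hsep : ∀ᶠ n in atTop, Separating n := by
    simp only [Separating, eventually_all_finset]
    intro a _ b _
    by_cases hab : a = b
    · exact Eventually.of_forall fun _ _ => hab
    obtain ⟨x, hx⟩ := Function.ne_iff.1 hab
    filter_upwards [eventually_gt_atTop x] with n hn hpre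
    exact absurd ((List.map_inj_left.1 hpre) x (List.mem_range.2 hn)) hx
  -- once `n` separates `s`, `code n` lies in `Y a` exactly for the `a ∈ s` that belong to `c`
  let code (n : ℕ) : ℕ := Encodable.encode (n, (s.filter (· ∈ c)).image (pre n))
  have hcode_inj : Injective code := fun n n' h =>
    congrArg Prod.fst (Encodable.encode_injective h)
  refine ((Nat.frequently_atTop_iff_infinite.1 hsep.frequently).image
    hcode_inj.injOn).mono ?_
  rintro _ ⟨n, hn, rfl⟩ a ha
  simp only [mem_image, mem_ofPred_eq, Encodable.encode_inj, code]
  constructor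
  · rintro ⟨_, hmem, rfl⟩
    obtain ⟨b, hb, hba⟩ := Finset.mem_image.1 hmem
    rw [Finset.mem_filter] at hb
    exact hn b hb.1 a ha hba ▸ hb.2
  · exact fun hac => ⟨_, Finset.mem_image_of_mem _ (Finset.mem_filter.2 ⟨ha, hac⟩), rfl⟩

theorem not_countable_nat_to_bool : ¬Countable (ℕ → Bool) := by
  rw [← Cardinal.mk_le_aleph0_iff, not_le]
  simpa using Cardinal.aleph0_lt_continuum

theorem exists_strictMono_fin_forall_mem {m : ℕ} {S : Fin m → Set ℕ} (hS : ∀ l, (S l).Infinite)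
    (N : ℕ) : ∃ g : Fin m → ℕ, StrictMono g ∧ ∀ l, N < g l ∧ g l ∈ S l := by
  induction m generalizing N with
  | zero => exact ⟨Fin.elim0, fun l => l.elim0, fun l => l.elim0⟩
  | succ m ih =>
    obtain ⟨g₀, hg₀S, hNg₀⟩ := (hS 0).exists_gt N
    obtain ⟨g, hg_mono, hg⟩ := ih (fun l => hS l.succ) g₀
    refine ⟨Fin.cons g₀ g, Fin.strictMono_cons.2 ⟨fun l => (hg l).1, hg_mono⟩,
      Fin.cases ⟨hNg₀, hg₀S⟩ fun l => ⟨hNg₀.trans (hg l).1, (hg l).2⟩⟩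

section Fragmented

variable {α β : Type*} [TopologicalSpace α]

def IsFragmented (g : α → β) : Prop :=
  ∀ P : Set α, P.Nonempty → ∃ V, IsOpen V ∧ (V ∩ P).Nonempty ∧ ∃ b, EqOn g (fun _ => b) (V ∩ P)

theorem Continuous.isFragmented [TopologicalSpace β] [DiscreteTopology β] {g : α → β}
    (hg : Continuous g) : IsFragmented g := by
  rintro P ⟨x, hx⟩
  exact ⟨g ⁻¹' {g x}, (isOpen_discrete _).preimage hg, ⟨x, rfl, hx⟩, g x, fun y hy => hy.1⟩

theorem exists_forall_exists_eq_of_not_isFragmented {g : α → Bool} (hg : ¬IsFragmented g) :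
    ∃ P : Set α, P.Nonempty ∧
      ∀ V, IsOpen V → (V ∩ P).Nonempty → ∀ b, ∃ x ∈ V ∩ P, g x = b := by
  simp only [IsFragmented, not_forall, not_exists, not_and] at hg
  obtain ⟨P, hP, hg⟩ := hg
  refine ⟨P, hP, fun V hV hVP b => ?_⟩
  obtain ⟨x, hx, hgx⟩ := not_forall₂.1 (hg V hV hVP !b)
  exact ⟨x, hx, by simpa using hgx⟩

open MeasurableSpace MeasureTheory in
theorem IsFragmented.measurableSet_preimage [MeasurableSpace β] {ℬ : Set (Set α)}
    (hℬ : TopologicalSpace.IsTopologicalBasis ℬ) (hℬc : ℬ.Countable) {g : α → β}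
    (hg : IsFragmented g) {s : Set β} (hs : MeasurableSet s) :
    MeasurableSet[generateFrom ℬ] (g ⁻¹' s) := by
  let := generateFrom ℬ
  set B := g ⁻¹' s
  set Ω := ⋃₀ {U ∈ ℬ | MeasurableSet (B ∩ U)} with hΩ_def
  have hΩ : MeasurableSet Ω :=
    .sUnion (hℬc.mono (sep_subset _ _)) fun U hU => measurableSet_generateFrom hU.1
  have hBΩ : MeasurableSet (B ∩ Ω) := by
    rw [hΩ_def, sUnion_eq_biUnion, inter_iUnion₂]
    exact .biUnion (hℬc.mono (sep_subset _ _)) fun U hU => hU.2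
  -- fragmentation on `Ωᶜ` would give one more basic set on which `B` is measurable
  suffices Ω = univ by rwa [this, inter_univ] at hBΩ
  by_contra hΩ_ne
  obtain ⟨V, hV, ⟨x, hxV, hxΩ⟩, b, hb⟩ := hg Ωᶜ (nonempty_compl.2 hΩ_ne)
  obtain ⟨U, hUℬ, hxU, hUV⟩ := hℬ.exists_subset_of_mem_open hxV hV
  have hUΩ : (U \ Ω) ∩ B = (U \ Ω) ∩ (fun _ => b) ⁻¹' s :=
    (EqOn.mono (show U \ Ω ⊆ V ∩ Ωᶜ from fun y hy => ⟨hUV hy.1, hy.2⟩) hb).inter_preimage_eq s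
  have hBU : B ∩ U = (B ∩ Ω) ∩ U ∪ (U \ Ω) ∩ B := by
    ext y
    simp only [mem_inter_iff, mem_union, Set.mem_sdiff]
    tauto
  have hBU_meas : MeasurableSet (B ∩ U) := by
    rw [hBU, hUΩ]
    exact (hBΩ.inter (measurableSet_generateFrom hUℬ)).union
      (((measurableSet_generateFrom hUℬ).diff hΩ).inter (measurable_const hs))
  exact hxΩ (mem_sUnion_of_mem hxU ⟨hUℬ, hBU_meas⟩)

open MeasureTheory in
theorem Cardinal.mk_setOf_isFragmented_le {α : Type u} [TopologicalSpace α]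
    [SecondCountableTopology α] : #{g : α → Bool | IsFragmented g} ≤ 𝔠 := by
  obtain ⟨ℬ, hℬc, -, hℬ⟩ := TopologicalSpace.exists_countable_basis α
  refine (Cardinal.mk_le_of_injective (f := fun g : {g : α → Bool | IsFragmented g} =>
    (⟨g.1 ⁻¹' {true}, g.2.measurableSet_preimage hℬ hℬc (measurableSet_singleton true)⟩ :
      {t | MeasurableSet[MeasurableSpace.generateFrom ℬ] t})) ?_).trans
    (MeasurableSpace.cardinal_measurableSet_le_continuum
      (hℬc.le_aleph0.trans Cardinal.aleph0_le_continuum))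
  rintro ⟨g, _⟩ ⟨g', _⟩ h
  refine Subtype.ext <| funext fun x => Bool.eq_iff_iff.2 ?_
  simpa using congrArg (x ∈ ·) (congrArg Subtype.val h)

end Fragmented

theorem exists_gt_eqOn_of_mem_closure_range {α β : Type*} [TopologicalSpace β]
    [DiscreteTopology β] {f : ℕ → α → β} {g : α → β} (hg : g ∈ closure (range f))
    (hgf : g ∉ range f) {F : Set α} (hF : F.Finite) (N : ℕ) : ∃ n > N, EqOn (f n) g F := by
  rw [← image_univ, ← Iic_union_Ioi (a := N), image_union, closure_union,
    ((finite_Iic N).image f).isClosed.closure_eq] at hg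
  have hg' : g ∈ closure (f '' Ioi N) := hg.resolve_left fun ⟨n, _, hn⟩ => hgf ⟨n, hn⟩
  obtain ⟨_, hU, n, hn, rfl⟩ := mem_closure_iff.1 hg' (F.pi fun x => {g x})
    (isOpen_set_pi hF fun _ _ => isOpen_discrete _) fun x _ => rfl
  exact ⟨n, hn, hU⟩

def cylinder (t : ℕ → ℕ) {m : ℕ} (ε : Fin m → Bool) : Set BinSeq := {y | ∀ k : Fin m, y (t k) = ε k}

theorem isClopen_cylinder (t : ℕ → ℕ) {m : ℕ} (ε : Fin m → Bool) : IsClopen (cylinder t ε) := by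
  simp only [cylinder, ofPred_forall]
  exact isClopen_iInter_of_finite fun k => (isClopen_discrete {ε k}).preimage (continuous_apply _)

@[simp]
theorem cylinder_fin_zero (t : ℕ → ℕ) (ε : Fin 0 → Bool) : cylinder t ε = univ :=
  eq_univ_of_forall fun _ k => k.elim0

theorem cylinder_congr {t t' : ℕ → ℕ} {m : ℕ} (h : ∀ k < m, t k = t' k) (ε : Fin m → Bool) :
    cylinder t ε = cylinder t' ε := by
  simp only [cylinder, h _ (Fin.is_lt _)]

theorem cylinder_update (t : ℕ → ℕ) {m : ℕ} (n : ℕ) (ε : Fin (m + 1) → Bool) :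
    cylinder (update t m n) ε = cylinder t (Fin.init ε) ∩ {y | y n = ε (Fin.last m)} := by
  ext y
  simp only [cylinder, mem_inter_iff, mem_ofPred_eq, Fin.forall_fin_succ', Fin.val_castSucc,
    Fin.val_last, update_self, Fin.init, update_of_ne (Fin.is_lt _).ne]

theorem pairwise_disjoint_cylinder (t : ℕ → ℕ) (m : ℕ) :
    Pairwise (Disjoint on fun ε : Fin m → Bool => cylinder t ε) := by
  intro ε ε' hne
  obtain ⟨k, hk⟩ := Function.ne_iff.1 hne
  exact disjoint_left.2 fun y hy hy' => hk ((hy k).symm.trans (hy' k))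

theorem exists_strictMono_forall_cylinder (Large : Set BinSeq → Prop) (huniv : Large univ)
    (hsplit : ∀ (m : ℕ) (t : ℕ → ℕ), (∀ ε : Fin m → Bool, Large (cylinder t ε)) → ∀ N,
      ∃ n > N, ∀ (ε : Fin m → Bool) (b : Bool), Large (cylinder t ε ∩ {y | y n = b})) :
    ∃ t : ℕ → ℕ, StrictMono t ∧ 0 < t 0 ∧ ∀ m (ε : Fin m → Bool), Large (cylinder t ε) := by
  choose! next hnext_gt hnext using fun m t ht => hsplit m t ht ((Finset.range m).sup t)
  let stage (m : ℕ) : ℕ → ℕ := Nat.rec (fun _ => 0) (fun m s => update s m (next m s)) m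
  have hstage (m : ℕ) : ∀ ε : Fin m → Bool, Large (cylinder (stage m) ε) := by
    induction m with
    | zero => simpa using huniv
    | succ m ih =>
      intro ε
      rw [show stage (m + 1) = update (stage m) m (next m (stage m)) from rfl, cylinder_update]
      exact hnext m _ ih _ _
  let t (k : ℕ) : ℕ := next k (stage k)
  have hagree (m : ℕ) : ∀ k < m, stage m k = t k := by
    induction m with
    | zero => intro k hk; omega
    | succ m ih =>
      intro k hk
      rcases Nat.lt_succ_iff_lt_or_eq.1 hk with hk | rfl
      · exact (update_of_ne hk.ne _ _).trans (ih k hk)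
      · exact update_self _ _ _
  have ht_gt (k : ℕ) : ∀ j < k, t j < t k := fun j hj =>
    calc t j = stage k j := (hagree k j hj).symm
      _ ≤ (Finset.range k).sup (stage k) := Finset.le_sup (Finset.mem_range.2 hj)
      _ < t k := hnext_gt k _ (hstage k)
  refine ⟨t, strictMono_nat_of_lt_succ fun k => ht_gt _ k k.lt_succ_self, ?_, fun m ε => ?_⟩
  · simpa using hnext_gt 0 (stage 0) (hstage 0)
  · rw [← cylinder_congr (hagree m)]
    exact hstage m ε

section ChoiceDomain

variable {𝒯 : Set BinSeq}

theorem IsChoiceDomain.exists_gt_forall_eq (h : IsChoiceDomain 𝒯) {κ : Type*} [Finite κ]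
    {x : κ → BinSeq} (hx𝒯 : ∀ i, x i ∈ 𝒯) (hx : Injective x) (c : κ → Bool) (N : ℕ) :
    ∃ n > N, ∀ i, x i n = c i := by
  obtain ⟨n, ⟨e⟩⟩ := Finite.exists_equiv_fin κ
  obtain ⟨τ, -, hτN, hτ⟩ := h (N + 1) n (x ∘ e.symm) (fun _ => hx𝒯 _)
    (hx.comp e.symm.injective) fun i _ => c (e.symm i)
  exact ⟨τ 0, N.lt_succ_self.trans (hτN 0), fun i => by simpa using hτ (e i) 0⟩

theorem IsChoiceDomain.exists_gt_forall_not_countable (h : IsChoiceDomain 𝒯) {ι : Type*}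
    [Finite ι] {S : ι → Set BinSeq} (hS𝒯 : ∀ i, S i ⊆ 𝒯) (hS : ∀ i, ¬(S i).Countable)
    (hdisj : Pairwise (Disjoint on S)) (N : ℕ) :
    ∃ n > N, ∀ i b, ¬(S i ∩ {y | y n = b}).Countable := by
  let Bad (i : ι) : Set BinSeq :=
    ⋃ (n) (b : Bool) (_ : (S i ∩ {y | y n = b}).Countable), S i ∩ {y | y n = b}
  have hBad (i : ι) : (Bad i).Countable :=
    countable_iUnion fun _ => countable_iUnion fun _ => countable_iUnion fun h => h
  have hgood (i : ι) : ∃ y : Bool → BinSeq, (∀ b, y b ∈ S i \ Bad i) ∧ Injective y := by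
    have : (S i \ Bad i).Nontrivial := by
      by_contra hs
      exact hS i (((not_nontrivial_iff.1 hs).countable.union (hBad i)).mono
        (subset_sdiff_union _ _))
    obtain ⟨y₀, hy₀, y₁, hy₁, hne⟩ := this
    refine ⟨fun b => cond b y₁ y₀, Bool.forall_bool.2 ⟨hy₀, hy₁⟩, ?_⟩
    rintro (_ | _) (_ | _) h <;> first | rfl | exact absurd h hne | exact absurd h.symm hne
  choose y hy hy_inj using hgood
  have hinj : Injective fun p : ι × Bool => y p.1 p.2 := by
    rintro ⟨i, b⟩ ⟨j, c⟩ hij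
    obtain rfl : i = j := by_contra fun hne => (hdisj hne).ne_of_mem (hy i b).1 (hy j c).1 hij
    exact congrArg _ (hy_inj i hij)
  obtain ⟨n, hn, hyn⟩ := h.exists_gt_forall_eq (fun p => hS𝒯 _ (hy p.1 p.2).1) hinj Prod.snd N
  refine ⟨n, hn, fun i b hcount => (hy i b).2 ?_⟩
  exact mem_iUnion.2 ⟨n, mem_iUnion₂.2 ⟨b, hcount, (hy i b).1, hyn (i, b)⟩⟩

end ChoiceDomain

namespace BinarySubshift

variable (X : BinarySubshift)

structure IsShattering (t : ℕ → ℕ) : Prop where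
  strictMono : StrictMono t
  -- `E(X)` is the closure of the positive powers of `σ` only
  pos : 0 < t 0
  nonempty_inter_cylinder : ∀ {m : ℕ} (ε : Fin m → Bool), (X.carrier ∩ cylinder t ε).Nonempty

variable {X}

instance : CompactSpace X.carrier := isCompact_iff_compactSpace.1 X.isClosed.isCompact

theorem S_iterate_val_apply (n : ℕ) (x : X.carrier) (j : ℕ) :
    (X.S^[n] x).val j = x.val (j + n) := by
  induction n generalizing x with
  | zero => rfl
  | succ n ih => rw [iterate_succ_apply, ih]; rfl

theorem S_iterate_mem_ellis {n : ℕ} (hn : 0 < n) : X.S^[n] ∈ X.Ellis :=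
  subset_closure ⟨n - 1, by simp only [Nat.sub_add_cancel hn]⟩

theorem IsShattering.exists_mem_forall_eq {t : ℕ → ℕ} (ht : X.IsShattering t) (a : ℕ → Bool) :
    ∃ y ∈ X.carrier, ∀ k, y (t k) = a k := by
  let K (m : ℕ) : Set BinSeq := X.carrier ∩ cylinder t fun k : Fin m => a k
  have hK_closed (m : ℕ) : IsClosed (K m) := X.isClosed.inter (isClopen_cylinder _ _).isClosed
  obtain ⟨y, hy⟩ := IsCompact.nonempty_iInter_of_sequence_nonempty_isCompact_isClosed K
    (fun m y hy => ⟨hy.1, fun k => hy.2 k.castSucc⟩) (fun m => ht.nonempty_inter_cylinder _)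
    (hK_closed 0).isCompact hK_closed
  refine ⟨y, (mem_iInter.1 hy 0).1, fun k => (mem_iInter.1 hy (k + 1)).2 ⟨k, k.lt_succ_self⟩⟩

theorem IsShattering.mk_ultrafilter_le {t : ℕ → ℕ} (ht : X.IsShattering t) :
    #(Ultrafilter ℕ) ≤ #X.Ellis := by
  classical
  have hlim (p : Ultrafilter ℕ) : ∃ u ∈ X.Ellis, Tendsto (fun k => X.S^[t k]) p (𝓝 u) :=
    isClosed_closure.isCompact.ultrafilter_le_nhds (p.map _) <| le_principal_iff.2 <|
      Ultrafilter.mem_map.2 <| univ_mem' fun k =>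
        S_iterate_mem_ellis (ht.pos.trans_le (ht.strictMono.monotone k.zero_le))
  choose u hu_mem hu_lim using hlim
  have hcoord (p : Ultrafilter ℕ) (x : X.carrier) :
      ∀ᶠ k in (p : Filter ℕ), x.val (t k) = (u p x).val 0 := by
    have := (((continuous_apply 0).comp continuous_subtype_val).comp
      (continuous_apply x)).continuousAt.tendsto.comp (hu_lim p)
    rw [nhds_discrete, tendsto_pure] at this
    simpa [comp_def, S_iterate_val_apply] using this
  refine Cardinal.mk_le_of_injective (f := fun p => (⟨u p, hu_mem p⟩ : X.Ellis)) fun p q hpq => ?_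
  refine Ultrafilter.eq_of_le fun A hA => ?_
  obtain ⟨x, hxX, hx⟩ := ht.exists_mem_forall_eq fun k => decide (k ∈ A)
  have hq : (u q ⟨x, hxX⟩).val 0 = true := by
    have hAq : ∀ᶠ k in (q : Filter ℕ), k ∈ A := hA
    obtain ⟨k, hkA, hk⟩ := (hAq.and (hcoord q ⟨x, hxX⟩)).exists
    simpa [← hk, hx] using hkA
  have hupq : u p = u q := congrArg Subtype.val hpq
  filter_upwards [hcoord p ⟨x, hxX⟩] with k hk
  rw [hupq, hq, hx] at hk
  simpa using hk

theorem IsShattering.nonTame {t : ℕ → ℕ} (ht : X.IsShattering t) : X.NonTame := by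
  obtain ⟨Y, hY⟩ := exists_isIndependentFamily_nat
  calc 𝔠 < 2 ^ 𝔠 := Cardinal.cantor _
    _ = 2 ^ #(ℕ → Bool) := by simp
    _ ≤ #(Ultrafilter ℕ) := hY.two_power_le_mk_ultrafilter
    _ ≤ #X.Ellis := ht.mk_ultrafilter_le

theorem IsShattering.exists_isChoiceDomain {t : ℕ → ℕ} (ht : X.IsShattering t) :
    ∃ 𝒯 ⊆ X.carrier, ¬𝒯.Countable ∧ IsChoiceDomain 𝒯 := by
  classical
  obtain ⟨Y, hY⟩ := exists_isIndependentFamily_nat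
  choose x hxX hx using fun a => ht.exists_mem_forall_eq fun k => decide (k ∈ Y a)
  have hx_inj : Injective x := fun a b hab => hY.injective <| ext fun k => by
    simpa [hx] using congrFun hab (t k)
  refine ⟨range x, range_subset_iff.2 hxX, fun h => not_countable_nat_to_bool ?_, ?_⟩
  · exact countable_univ_iff.1 <| (mapsTo_range x univ).countable_of_injOn hx_inj.injOn h
  · rintro m n z hz hz_inj φ
    choose A hA using hz
    obtain rfl : x ∘ A = z := funext hA
    have hA_inj : Injective A := hz_inj.of_comp
    obtain ⟨g, hg_mono, hg⟩ := exists_strictMono_fin_forall_mem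
      (S := fun l => {k | ∀ a ∈ Finset.univ.image A, k ∈ Y a ↔ a ∈ A '' {i | φ i l}})
      (fun l => hY _ _) m
    refine ⟨t ∘ g, ht.strictMono.comp hg_mono,
      fun l => (hg l).1.trans_le (ht.strictMono.id_le _), fun i l => ?_⟩
    have := (hg l).2 (A i) (Finset.mem_image_of_mem _ (Finset.mem_univ i))
    simp [hx, this, hA_inj.mem_set_image]

variable (X : BinarySubshift)

-- the `0`-th coordinate of `σ^(n + 1) x`
def coordinate (n : ℕ) (x : X.carrier) : Bool := x.val (n + 1)

variable {X}

theorem continuous_coordinate (n : ℕ) : Continuous (X.coordinate n) :=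
  (continuous_apply (n + 1)).comp continuous_subtype_val

theorem val_apply_eq_of_mem_ellis {u : X.carrier → X.carrier} (hu : u ∈ X.Ellis)
    (x : X.carrier) (j : ℕ) : (u x).val j = (u (X.S^[j] x)).val 0 := by
  have hclosed : IsClosed {u : X.carrier → X.carrier | (u x).val j = (u (X.S^[j] x)).val 0} :=
    isClosed_eq ((continuous_apply j).comp continuous_subtype_val |>.comp (continuous_apply x))
      ((continuous_apply 0).comp continuous_subtype_val |>.comp (continuous_apply _))
  refine closure_minimal ?_ hclosed hu
  rintro _ ⟨n, rfl⟩
  simp only [mem_ofPred_eq, S_iterate_val_apply]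
  ring_nf

theorem mk_ellis_le_mk_closure_range_coordinate :
    #X.Ellis ≤ #(closure (range X.coordinate)) := by
  let ev (u : X.carrier → X.carrier) (x : X.carrier) : Bool := (u x).val 0
  have hev : Continuous ev :=
    continuous_pi fun x =>
      (continuous_apply 0).comp continuous_subtype_val |>.comp (continuous_apply x)
  have hinj : InjOn ev X.Ellis := by
    intro u hu v hv huv
    ext x j
    rw [val_apply_eq_of_mem_ellis hu, val_apply_eq_of_mem_ellis hv]
    exact congrFun huv _
  have hmaps : MapsTo ev X.Ellis (closure (range X.coordinate)) := by
    refine fun u hu => map_mem_closure hev hu ?_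
    rintro _ ⟨n, rfl⟩
    exact ⟨n, funext fun x => by simp only [ev, coordinate, S_iterate_val_apply, zero_add]⟩
  rw [← Cardinal.mk_image_eq_of_injOn _ _ hinj]
  exact Cardinal.mk_le_mk_of_subset hmaps.image_subset

theorem NonTame.exists_not_isFragmented (h : X.NonTame) :
    ∃ g ∈ closure (range X.coordinate), ¬IsFragmented g := by
  by_contra! hfrag
  refine (h.trans_le mk_ellis_le_mk_closure_range_coordinate).not_ge ?_
  exact (Cardinal.mk_le_mk_of_subset hfrag).trans Cardinal.mk_setOf_isFragmented_le

theorem NonTame.exists_isShattering (h : X.NonTame) : ∃ t, X.IsShattering t := by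
  obtain ⟨g, hg, hg_frag⟩ := h.exists_not_isFragmented
  have hg_coord : g ∉ range X.coordinate := by
    rintro ⟨n, rfl⟩
    exact hg_frag (continuous_coordinate n).isFragmented
  obtain ⟨P, ⟨x₀, hx₀⟩, hP⟩ := exists_forall_exists_eq_of_not_isFragmented hg_frag
  obtain ⟨t, ht_mono, ht_pos, ht⟩ := exists_strictMono_forall_cylinder
    (fun C => ∃ x ∈ P, x.val ∈ C) ⟨x₀, hx₀, trivial⟩ fun m t ht N => by
      have (ε : Fin m → Bool) (b : Bool) : ∃ x ∈ P, x.val ∈ cylinder t ε ∧ g x = b := by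
        obtain ⟨x, hxP, hx⟩ := ht ε
        obtain ⟨y, ⟨hyC, hyP⟩, hy⟩ := hP _
          ((isClopen_cylinder t ε).isOpen.preimage continuous_subtype_val) ⟨x, hx, hxP⟩ b
        exact ⟨y, hyP, hyC, hy⟩
      choose q hqP hqC hq using this
      obtain ⟨n, hn, hqn⟩ := exists_gt_eqOn_of_mem_closure_range hg hg_coord
        (finite_range fun p : (Fin m → Bool) × Bool => q p.1 p.2) N
      exact ⟨n + 1, hn.trans n.lt_succ_self, fun ε b =>
        ⟨q ε b, hqP ε b, hqC ε b, (hqn ⟨(ε, b), rfl⟩).trans (hq ε b)⟩⟩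
  exact ⟨t, ht_mono, ht_pos, fun ε =>
    let ⟨x, _, hx⟩ := ht _ ε
    ⟨x.val, x.2, hx⟩⟩

end BinarySubshift

theorem IsChoiceDomain.exists_isShattering {𝒯 : Set BinSeq} {X : BinarySubshift}
    (h : IsChoiceDomain 𝒯) (h𝒯X : 𝒯 ⊆ X.carrier) (h𝒯 : ¬𝒯.Countable) :
    ∃ t, X.IsShattering t := by
  obtain ⟨t, ht_mono, ht_pos, ht⟩ := exists_strictMono_forall_cylinder
    (fun C => ¬(𝒯 ∩ C).Countable) (by simpa using h𝒯) fun m t ht N => by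
      obtain ⟨n, hn, hsplit⟩ := h.exists_gt_forall_not_countable
        (S := fun ε : Fin m → Bool => 𝒯 ∩ cylinder t ε) (fun _ => inter_subset_left) ht
        ((pairwise_disjoint_cylinder t m).mono fun _ _ =>
          Disjoint.mono inter_subset_right inter_subset_right) N
      exact ⟨n, hn, fun ε b => by simpa only [inter_assoc] using hsplit ε b⟩
  refine ⟨t, ht_mono, ht_pos, fun ε => ?_⟩
  refine (nonempty_iff_ne_empty.2 fun he => ht _ ε ?_).mono (inter_subset_inter_left _ h𝒯X)
  exact he ▸ countable_empty

/-- A binary subshift is non-tame iff it admits an uncountable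
choice domain. -/
theorem subshift_nontame_iff_uncountable_choice_domain (X : BinarySubshift) :
    X.NonTame ↔ ∃ 𝒯 ⊆ X.carrier, ¬𝒯.Countable ∧ IsChoiceDomain 𝒯 := by
  constructor
  · intro h
    obtain ⟨t, ht⟩ := h.exists_isShattering
    exact ht.exists_isChoiceDomain
  · rintro ⟨𝒯, h𝒯X, h𝒯, h⟩
    obtain ⟨t, ht⟩ := h.exists_isShattering h𝒯X h𝒯
    exact ht.nonTame
end
end

section
/- A Floyd–Auslander system (X,T) is minimal (every forward orbit is dense in X) if and only if there exist infinitely many n with |H₀(n)| > 0 and infinitely many m with |H₂(m)| > 0. -/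
open Filter Topology

noncomputable section

def lam0 : ℝ → ℝ := fun x => x / 2
def lam1 : ℝ → ℝ := fun x => x
def lam2 : ℝ → ℝ := fun x => x / 2 + 1 / 2

/-- The defining data of a Floyd–Auslander construction: a sequence `p` of
integers `≥ 2` and, for each `n` and `j ∈ [p n]`, a map `lam n j` which is one
of `lam0, lam1, lam2`. -/
structure FAData where
  p : ℕ → ℕ
  hp : ∀ n, 2 ≤ p n
  lam : (n : ℕ) → Fin (p n) → ℝ → ℝ
  hlam : ∀ n j, lam n j = lam0 ∨ lam n j = lam1 ∨ lam n j = lam2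

namespace FAData

variable (D : FAData)

abbrev Sigma : Type := ∀ n, Fin (D.p n)

def fin0 (n : ℕ) : Fin (D.p n) := ⟨0, by have := D.hp n; omega⟩

def finTop (n : ℕ) : Fin (D.p n) := ⟨D.p n - 1, by have := D.hp n; omega⟩

/-- Addition mod `p n`, as an element of `Fin (p n)`. -/
def modAdd (n : ℕ) (a b : ℕ) : Fin (D.p n) :=
  ⟨(a + b) % D.p n, Nat.mod_lt _ (by have := D.hp n; omega)⟩

def Q (n : ℕ) : Set (Fin (D.p n)) := {j | D.lam n j = lam1}
def H0 (n : ℕ) : Set (Fin (D.p n)) := {j | D.lam n j = lam0}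
def H2 (n : ℕ) : Set (Fin (D.p n)) := {j | D.lam n j = lam2}

/-- The carry entering position `n` when adding `1̲ = 10^∞` to `α`. -/
def carryIn (α : D.Sigma) : ℕ → ℕ
  | 0 => 1
  | n + 1 => if D.p n ≤ (α n).val + carryIn α n then 1 else 0

/-- The odometer add-one map `α ↦ α + 1̲`. -/
def addOne (α : D.Sigma) : D.Sigma := fun n => D.modAdd n (α n).val (D.carryIn α n)

/-- `lamComp α n = λ¹_{α₁} ∘ … ∘ λⁿ_{α_n}` (with `lamComp α 0 = id`). -/
def lamComp (α : D.Sigma) : ℕ → ℝ → ℝ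
  | 0 => id
  | n + 1 => lamComp α n ∘ D.lam n (α n)

/-- The space `X ⊆ Σ × ℝ` of the Floyd–Auslander construction. -/
def X : Set (D.Sigma × ℝ) :=
  {q | ∃ z ∈ Set.Icc (0 : ℝ) 1, Tendsto (fun n => D.lamComp q.1 n z) atTop (𝓝 q.2)}

/-- The fibre `L_α = ({α} × [0,1]) ∩ X`. -/
def Lfib (α : D.Sigma) : Set (D.Sigma × ℝ) := {q ∈ D.X | q.1 = α}

/-- A fibre `L_α` is maximal if the length (diameter) of `π₂(L_α)` is maximal. -/
def IsMaximalFiber (α : D.Sigma) : Prop :=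
  ∀ β : D.Sigma, Metric.diam (Prod.snd '' D.Lfib β) ≤ Metric.diam (Prod.snd '' D.Lfib α)

/-- A convenient subset `𝒜 ⊆ Σ`. -/
def Convenient (𝒜 : Set D.Sigma) : Prop :=
  ¬𝒜.Countable ∧ (∀ α ∈ 𝒜, D.IsMaximalFiber α) ∧
    ∃ q k k' : ℕ → ℕ, StrictMono q ∧ StrictMono k ∧ StrictMono k' ∧
      (∀ ℓ, ∃ ξ1 ξ2 : Fin (D.p (q ℓ)), ξ1 ∈ D.Q (q ℓ) ∧ ξ2 ∈ D.Q (q ℓ) ∧ ξ1 < ξ2 ∧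
        ∀ α ∈ 𝒜, α (q ℓ) = ξ1) ∧
      (∀ ℓ, (D.H2 (k ℓ)).Nonempty ∧ ∃ ζ ∈ D.Q (k ℓ), ∀ α ∈ 𝒜, α (k ℓ) = ζ) ∧
      (∀ ℓ, (D.H0 (k' ℓ)).Nonempty ∧ ∃ ζ ∈ D.Q (k' ℓ), ∀ α ∈ 𝒜, α (k' ℓ) = ζ)

/-- Condition (A). -/
def CondA : Prop :=
  ∃ ns : ℕ → ℕ, StrictMono ns ∧ ∀ ℓ, 2 ≤ (D.Q (ns ℓ)).ncard ∧
    ∃ a0 a1 : Fin (D.p (ns ℓ)), a0 ∈ D.Q (ns ℓ) ∧ a1 ∈ D.Q (ns ℓ) ∧ a0 ≠ a1 ∧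
      ∃ Δ : Fin (D.p (ns ℓ)),
        D.modAdd (ns ℓ) a0.val Δ.val ∈ D.H0 (ns ℓ) ∧
        D.modAdd (ns ℓ) a1.val Δ.val ∈ D.H2 (ns ℓ)

/-- Condition (B). -/
def CondB : Prop :=
  ∃ ns : ℕ → ℕ, StrictMono ns ∧ ∀ ℓ, 2 ≤ (D.Q (ns ℓ)).ncard ∧
    ∀ a0 a1 : Fin (D.p (ns ℓ)), a0 ∈ D.Q (ns ℓ) → a1 ∈ D.Q (ns ℓ) → a0 ≠ a1 →
      ∀ j : Fin (D.p (ns ℓ)),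
        (D.modAdd (ns ℓ) a0.val j.val ∈ D.H0 (ns ℓ) ↔
          D.modAdd (ns ℓ) a1.val j.val ∈ D.H0 (ns ℓ)) ∧
        (D.modAdd (ns ℓ) a0.val j.val ∈ D.H2 (ns ℓ) ↔
          D.modAdd (ns ℓ) a1.val j.val ∈ D.H2 (ns ℓ))

/-- Condition (C). -/
def CondC : Prop :=
  ∃ ns : ℕ → ℕ, StrictMono ns ∧ ∀ ℓ, 2 ≤ (D.Q (ns ℓ)).ncard ∧
    ∃ a0 a1 : Fin (D.p (ns ℓ)), a0 ∈ D.Q (ns ℓ) ∧ a1 ∈ D.Q (ns ℓ) ∧ a0 ≠ a1 ∧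
      ∃ Δ : Fin (D.p (ns ℓ)), ∃ h : a0.val + Δ.val < D.p (ns ℓ),
        (⟨a0.val + Δ.val, h⟩ : Fin (D.p (ns ℓ))) ∈ D.Q (ns ℓ) ∧
        D.modAdd (ns ℓ) a1.val Δ.val ∈ D.H0 (ns ℓ) ∪ D.H2 (ns ℓ)

end FAData

/-- A Floyd–Auslander system: the data of the construction together with the
skew-product map `T`, the continuity conditions (i) and the condition (ii) that
`Q n = ∅` for at most finitely many `n`. -/
structure FASystem extends FAData where
  T : toFAData.X → toFAData.X
  hT : ∀ (α : toFAData.Sigma) (z y y' : ℝ), z ∈ Set.Icc (0 : ℝ) 1 →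
    Tendsto (fun n => toFAData.lamComp α n z) atTop (𝓝 y) →
    Tendsto (fun n => toFAData.lamComp (toFAData.addOne α) n z) atTop (𝓝 y') →
    ∀ hq : (α, y) ∈ toFAData.X,
      (T ⟨(α, y), hq⟩ : toFAData.Sigma × ℝ) = (toFAData.addOne α, y')
  infLeft : {n : ℕ | toFAData.lam n (toFAData.fin0 n) = lam0 ∨
      toFAData.lam n (toFAData.fin0 n) = lam2}.Infinite
  infRight : {n : ℕ | toFAData.lam n (toFAData.finTop n) = lam0 ∨
      toFAData.lam n (toFAData.finTop n) = lam2}.Infinite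
  Qfin : {n : ℕ | toFAData.Q n = ∅}.Finite

namespace FASystem

variable (S : FASystem)

/-- The (forward) Ellis semigroup `E(X)`: the closure of `{Tⁿ : n ≥ 1}` in `X^X`. -/
def Ellis : Set (S.toFAData.X → S.toFAData.X) :=
  closure (Set.range fun n : ℕ => S.T^[n + 1])

/-- The set of idempotents `J(X)` of the Ellis semigroup. -/
def J : Set (S.toFAData.X → S.toFAData.X) := {f | f ∈ S.Ellis ∧ f ∘ f = f}

/-- The set of minimal idempotents `J^min(X)` (minimal for `e ≤ f ↔ e = e ∘ f`). -/
def Jmin : Set (S.toFAData.X → S.toFAData.X) :=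
  {f | f ∈ S.J ∧ ∀ e ∈ S.J, e = e ∘ f → e = f}

/-- `(X,T)` is minimal: every forward orbit is dense. -/
def Minimal : Prop := ∀ x : S.toFAData.X, Dense (Set.range fun n : ℕ => S.T^[n] x)

/-- Property (∗). -/
def PropertyStar : Prop :=
  ∃ a ∈ Set.Ioo (0 : ℝ) 1, ∃ 𝒜 : Set S.toFAData.Sigma, S.toFAData.Convenient 𝒜 ∧
    ((∀ B ⊆ 𝒜, ∃ f ∈ S.J, ∃ B1 B2 : Set S.toFAData.Sigma, B1 ∪ B2 = B ∧ Disjoint B1 B2 ∧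
        (∀ α ∈ 𝒜 \ B, ∃ b ∈ Set.Icc (0 : ℝ) a, ∀ q : S.toFAData.X,
          (q : S.toFAData.Sigma × ℝ).1 = α → (f q : S.toFAData.Sigma × ℝ) = (α, b)) ∧
        (∀ α ∈ B1, ∃ c : ℝ, a < c ∧ ∀ q : S.toFAData.X,
          (q : S.toFAData.Sigma × ℝ).1 = α → (f q : S.toFAData.Sigma × ℝ) = (α, c)) ∧
        (∀ α ∈ B2, ∀ q : S.toFAData.X, (q : S.toFAData.Sigma × ℝ).1 = α → f q = q)) ∨
     (∀ B ⊆ 𝒜, ∃ f ∈ S.J, ∃ B1 B2 : Set S.toFAData.Sigma, B1 ∪ B2 = B ∧ Disjoint B1 B2 ∧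
        (∀ α ∈ 𝒜 \ B, ∃ b ∈ Set.Icc a (1 : ℝ), ∀ q : S.toFAData.X,
          (q : S.toFAData.Sigma × ℝ).1 = α → (f q : S.toFAData.Sigma × ℝ) = (α, b)) ∧
        (∀ α ∈ B1, ∃ c : ℝ, c < a ∧ ∀ q : S.toFAData.X,
          (q : S.toFAData.Sigma × ℝ).1 = α → (f q : S.toFAData.Sigma × ℝ) = (α, c)) ∧
        (∀ α ∈ B2, ∀ q : S.toFAData.X, (q : S.toFAData.Sigma × ℝ).1 = α → f q = q)))

end FASystem

/-!
Every point of `X` is `(α, φ_α z)` for some `z ∈ [0,1]`, where `φ_α z = lim λ_α^n z`, and `T` sends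
it to `(α + 1̲, φ_{α+1̲} z)`.

If only finitely many levels contain a `λ₀`, then from some level on every map fixes `1`, so
`φ_γ 1` depends only on finitely many digits of `γ`. Since `Q(n) ≠ ∅` eventually, some fibre is a
nondegenerate interval, and the orbit of its top point never comes close to its bottom point.
The same argument with `λ₂` and the fixed point `0` gives the other half.

Conversely, between infinitely many `λ₀`- and `λ₂`-levels one can fill in `λ₁`-digits so that a
finite block of levels maps `[0,1]` into the `2^{-k}`-neighbourhood of any target point (its
binary expansion). As the odometer orbit of any `α` visits every cylinder, the orbit of any
point of `X` comes arbitrarily close to any other point.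
-/

def IsNonexpandingAffine (f : ℝ → ℝ) : Prop :=
  ∃ a b : ℝ, 0 < a ∧ a ≤ 1 ∧ ∀ x, f x = a * x + b

namespace IsNonexpandingAffine

variable {f g : ℝ → ℝ}

lemma id : IsNonexpandingAffine id := ⟨1, 0, one_pos, le_rfl, fun x => by simp⟩

lemma comp (hf : IsNonexpandingAffine f) (hg : IsNonexpandingAffine g) :
    IsNonexpandingAffine (f ∘ g) := by
  obtain ⟨a, b, ha, ha1, hf⟩ := hf
  obtain ⟨c, d, hc, hc1, hg⟩ := hg
  exact ⟨a * c, a * d + b, mul_pos ha hc, mul_le_one₀ ha1 hc.le hc1,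
    fun x => by simp only [Function.comp_apply, hf, hg]; ring⟩

lemma lipschitzWith (hf : IsNonexpandingAffine f) : LipschitzWith 1 f := by
  obtain ⟨a, b, ha, ha1, hf⟩ := hf
  refine LipschitzWith.of_dist_le_mul fun x y => ?_
  rw [Real.dist_eq, Real.dist_eq, hf, hf, NNReal.coe_one, one_mul,
    show a * x + b - (a * y + b) = a * (x - y) by ring, abs_mul, abs_of_pos ha]
  exact mul_le_of_le_one_left (abs_nonneg _) ha1

lemma strictMono (hf : IsNonexpandingAffine f) : StrictMono f := by
  obtain ⟨a, b, ha, -, hf⟩ := hf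
  intro x y hxy
  rw [hf, hf]
  gcongr

lemma apply_eq_interpolate (hf : IsNonexpandingAffine f) (x : ℝ) :
    f x = (1 - x) * f 0 + x * f 1 := by
  obtain ⟨a, b, -, -, hf⟩ := hf
  rw [hf, hf, hf]
  ring

end IsNonexpandingAffine

namespace FAData

variable {D : FAData}

lemma lam_isNonexpandingAffine (n : ℕ) (j : Fin (D.p n)) :
    IsNonexpandingAffine (D.lam n j) := by
  rcases D.hlam n j with h | h | h <;> rw [h]
  · exact ⟨1 / 2, 0, by norm_num, by norm_num, fun x => by simp only [lam0]; ring⟩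
  · exact IsNonexpandingAffine.id
  · exact ⟨1 / 2, 1 / 2, by norm_num, by norm_num, fun x => by simp only [lam2]; ring⟩

lemma lam_mapsTo (n : ℕ) (j : Fin (D.p n)) :
    Set.MapsTo (D.lam n j) (Set.Icc 0 1) (Set.Icc 0 1) := by
  rintro x ⟨hx0, hx1⟩
  rcases D.hlam n j with h | h | h <;> rw [h] <;> simp only [lam0, lam1, lam2, Set.mem_Icc] <;>
    constructor <;> linarith

lemma lam_apply_one {n : ℕ} {j : Fin (D.p n)} (hj : j ∉ D.H0 n) : D.lam n j 1 = 1 := by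
  rcases D.hlam n j with h | h | h
  · exact absurd h hj
  · rw [h]; rfl
  · rw [h]; norm_num [lam2]

lemma lam_apply_zero {n : ℕ} {j : Fin (D.p n)} (hj : j ∉ D.H2 n) : D.lam n j 0 = 0 := by
  rcases D.hlam n j with h | h | h
  · rw [h]; norm_num [lam0]
  · rw [h]; rfl
  · exact absurd h hj

variable (D) in
def block (α : D.Sigma) (n : ℕ) : ℕ → ℝ → ℝ
  | 0 => id
  | k + 1 => block α n k ∘ D.lam (n + k) (α (n + k))

lemma lamComp_add (α : D.Sigma) (n k : ℕ) :
    D.lamComp α (n + k) = D.lamComp α n ∘ D.block α n k := by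
  induction k with
  | zero => rfl
  | succ k ih => rw [← add_assoc, lamComp, ih]; rfl

lemma block_add (α : D.Sigma) (n k l : ℕ) :
    D.block α n (k + l) = D.block α n k ∘ D.block α (n + k) l := by
  induction l with
  | zero => rfl
  | succ l ih => rw [← add_assoc, block, ih, block, add_assoc]; rfl

lemma lamComp_eq_block (α : D.Sigma) (n : ℕ) : D.lamComp α n = D.block α 0 n := by
  simpa [lamComp] using lamComp_add α 0 n

lemma block_isNonexpandingAffine (α : D.Sigma) (n k : ℕ) :
    IsNonexpandingAffine (D.block α n k) := by
  induction k with
  | zero => exact IsNonexpandingAffine.id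
  | succ k ih => exact ih.comp (lam_isNonexpandingAffine _ _)

lemma block_mapsTo (α : D.Sigma) (n k : ℕ) :
    Set.MapsTo (D.block α n k) (Set.Icc 0 1) (Set.Icc 0 1) := by
  induction k with
  | zero => exact Set.mapsTo_id _
  | succ k ih => exact ih.comp (lam_mapsTo _ _)

lemma block_congr {α β : D.Sigma} {n k : ℕ} (h : ∀ i, n ≤ i → i < n + k → α i = β i) :
    D.block α n k = D.block β n k := by
  induction k with
  | zero => rfl
  | succ k ih =>
    rw [block, block, ih fun i hi hik => h i hi (by omega), h (n + k) (by omega) (by omega)]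

lemma block_apply_of_fixed {α : D.Sigma} {n k : ℕ} {z : ℝ}
    (h : ∀ i, n ≤ i → i < n + k → D.lam i (α i) z = z) : D.block α n k z = z := by
  induction k with
  | zero => rfl
  | succ k ih =>
    rw [block, Function.comp_apply, h (n + k) (by omega) (by omega)]
    exact ih fun i hi hik => h i hi (by omega)

lemma lamComp_isNonexpandingAffine (α : D.Sigma) (n : ℕ) :
    IsNonexpandingAffine (D.lamComp α n) :=
  lamComp_eq_block α n ▸ block_isNonexpandingAffine α 0 n

lemma lamComp_mapsTo (α : D.Sigma) (n : ℕ) :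
    Set.MapsTo (D.lamComp α n) (Set.Icc 0 1) (Set.Icc 0 1) :=
  lamComp_eq_block α n ▸ block_mapsTo α 0 n

lemma lamComp_congr {α β : D.Sigma} {n : ℕ} (h : ∀ i < n, α i = β i) :
    D.lamComp α n = D.lamComp β n := by
  rw [lamComp_eq_block, lamComp_eq_block, block_congr fun i _ hi => h i (by omega)]

variable (D) in
/-- The limit of `lamComp α n z`: the endpoints `lamComp α n 0` and `lamComp α n 1` are monotone
and every `lamComp α n` is affine, so the limit exists for every `z`. -/
def phi (α : D.Sigma) (z : ℝ) : ℝ :=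
  (1 - z) * (⨆ n, D.lamComp α n 0) + z * ⨅ n, D.lamComp α n 1

lemma tendsto_lamComp_phi (α : D.Sigma) (z : ℝ) :
    Tendsto (fun n => D.lamComp α n z) atTop (𝓝 (D.phi α z)) := by
  have h01 : (0 : ℝ) ∈ Set.Icc (0 : ℝ) 1 := by norm_num
  have h11 : (1 : ℝ) ∈ Set.Icc (0 : ℝ) 1 := by norm_num
  have hstep : ∀ n x, D.lamComp α (n + 1) x = D.lamComp α n (D.lam n (α n) x) := fun _ _ => rfl
  have hlo : Monotone fun n => D.lamComp α n 0 := monotone_nat_of_le_succ fun n => by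
    rw [hstep]
    exact (lamComp_isNonexpandingAffine α n).strictMono.monotone (lam_mapsTo n (α n) h01).1
  have hhi : Antitone fun n => D.lamComp α n 1 := antitone_nat_of_succ_le fun n => by
    rw [hstep]
    exact (lamComp_isNonexpandingAffine α n).strictMono.monotone (lam_mapsTo n (α n) h11).2
  have hlo' := tendsto_atTop_ciSup hlo ⟨1, by
    rintro _ ⟨n, rfl⟩; exact (lamComp_mapsTo α n h01).2⟩
  have hhi' := tendsto_atTop_ciInf hhi ⟨0, by
    rintro _ ⟨n, rfl⟩; exact (lamComp_mapsTo α n h11).1⟩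
  simp_rw [(lamComp_isNonexpandingAffine α _).apply_eq_interpolate z]
  exact (hlo'.const_mul _).add (hhi'.const_mul _)

lemma phi_mem_X (α : D.Sigma) {z : ℝ} (hz : z ∈ Set.Icc (0 : ℝ) 1) : (α, D.phi α z) ∈ D.X :=
  ⟨z, hz, tendsto_lamComp_phi α z⟩

lemma exists_eq_phi_of_mem_X {q : D.Sigma × ℝ} (hq : q ∈ D.X) :
    ∃ z ∈ Set.Icc (0 : ℝ) 1, q.2 = D.phi q.1 z := by
  obtain ⟨z, hz, hlim⟩ := hq
  exact ⟨z, hz, tendsto_nhds_unique hlim (tendsto_lamComp_phi q.1 z)⟩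

lemma phi_eq_lamComp_of_fixed {α : D.Sigma} {z : ℝ} {N : ℕ}
    (h : ∀ i, N ≤ i → D.lam i (α i) z = z) : D.phi α z = D.lamComp α N z := by
  refine tendsto_nhds_unique (tendsto_lamComp_phi α z) (tendsto_atTop_of_eventually_const
    (i₀ := N) fun n hn => ?_)
  obtain ⟨k, rfl⟩ := Nat.exists_eq_add_of_le hn
  rw [lamComp_add, Function.comp_apply, block_apply_of_fixed fun i hi _ => h i hi]

lemma phi_mem_image_lamComp (α : D.Sigma) {z : ℝ} (hz : z ∈ Set.Icc (0 : ℝ) 1) (N : ℕ) :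
    D.phi α z ∈ D.lamComp α N '' Set.Icc 0 1 := by
  have hclosed : IsClosed (D.lamComp α N '' Set.Icc 0 1) :=
    (isCompact_Icc.image (lamComp_isNonexpandingAffine α N).lipschitzWith.continuous).isClosed
  refine hclosed.mem_of_tendsto (tendsto_lamComp_phi α z) ?_
  filter_upwards [eventually_ge_atTop N] with n hn
  obtain ⟨k, rfl⟩ := Nat.exists_eq_add_of_le hn
  rw [lamComp_add]
  exact ⟨_, block_mapsTo α N k hz, rfl⟩

variable (D) in
def radixProd (M : ℕ) : ℕ := ∏ i ∈ Finset.range M, D.p i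

variable (D) in
/-- The number `∑_{i<M} γᵢ · p₀ ⋯ p_{i-1}` whose mixed-radix digits are the first `M` digits of
`γ`; adding `1̲` adds one to it modulo `radixProd M`. -/
def prefixValue (γ : D.Sigma) (M : ℕ) : ℕ :=
  ∑ i ∈ Finset.range M, (γ i : ℕ) * D.radixProd i

lemma prefixValue_eq_finPiFinEquiv (γ : D.Sigma) (M : ℕ) :
    D.prefixValue γ M = finPiFinEquiv (fun i : Fin M => γ i) := by
  rw [finPiFinEquiv_apply, prefixValue, ← Fin.sum_univ_eq_sum_range]
  congr 1
  ext i
  rw [radixProd, ← Fin.prod_univ_eq_prod_range]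
  rfl

lemma prefixValue_lt (γ : D.Sigma) (M : ℕ) : D.prefixValue γ M < D.radixProd M := by
  rw [prefixValue_eq_finPiFinEquiv, radixProd, ← Fin.prod_univ_eq_prod_range]
  exact Fin.isLt _

lemma eq_of_prefixValue_eq {γ β : D.Sigma} {M : ℕ} (h : D.prefixValue γ M = D.prefixValue β M)
    {i : ℕ} (hi : i < M) : γ i = β i := by
  rw [prefixValue_eq_finPiFinEquiv, prefixValue_eq_finPiFinEquiv, Fin.val_inj] at h
  exact congrFun (finPiFinEquiv.injective h) ⟨i, hi⟩

lemma carryIn_succ (γ : D.Sigma) (n : ℕ) :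
    D.carryIn γ (n + 1) = ((γ n : ℕ) + D.carryIn γ n) / D.p n := by
  have hc : D.carryIn γ n ≤ 1 := by
    cases n with
    | zero => exact le_rfl
    | succ n => rw [carryIn]; split <;> omega
  have hγ := (γ n).isLt
  rw [carryIn]
  split
  · exact (Nat.div_eq_of_lt_le (by omega) (by omega)).symm
  · exact (Nat.div_eq_of_lt (by omega)).symm

lemma prefixValue_addOne (γ : D.Sigma) (M : ℕ) :
    D.prefixValue (D.addOne γ) M + D.carryIn γ M * D.radixProd M = D.prefixValue γ M + 1 := by
  induction M with
  | zero => simp [prefixValue, radixProd, carryIn]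
  | succ M ih =>
    have hdigit := Nat.mod_add_div ((γ M : ℕ) + D.carryIn γ M) (D.p M)
    simp only [prefixValue, radixProd, Finset.sum_range_succ, Finset.prod_range_succ] at ih ⊢
    rw [carryIn_succ]
    change _ + ((γ M : ℕ) + D.carryIn γ M) % D.p M * _ + _ = _
    linear_combination ih + (∏ i ∈ Finset.range M, D.p i) * hdigit

lemma prefixValue_iterate_addOne (γ : D.Sigma) (M n : ℕ) :
    D.prefixValue (D.addOne^[n] γ) M ≡ D.prefixValue γ M + n [MOD D.radixProd M] := by
  induction n with
  | zero => rfl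
  | succ n ih =>
    rw [Function.iterate_succ_apply']
    calc D.prefixValue (D.addOne (D.addOne^[n] γ)) M
        ≡ D.prefixValue (D.addOne (D.addOne^[n] γ)) M
          + D.carryIn (D.addOne^[n] γ) M * D.radixProd M [MOD D.radixProd M] :=
          (Nat.add_mul_mod_self_right _ _ _).symm
      _ = D.prefixValue (D.addOne^[n] γ) M + 1 := prefixValue_addOne _ M
      _ ≡ D.prefixValue γ M + n + 1 [MOD D.radixProd M] := ih.add_right 1

lemma exists_iterate_addOne_eq (α β : D.Sigma) (M : ℕ) :
    ∃ n, ∀ i < M, (D.addOne^[n] α) i = β i := by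
  have hα := prefixValue_lt α M
  refine ⟨D.radixProd M - D.prefixValue α M + D.prefixValue β M,
    fun i hi => eq_of_prefixValue_eq ?_ hi⟩
  refine Nat.ModEq.eq_of_lt_of_lt ?_ (prefixValue_lt _ M) (prefixValue_lt β M)
  refine (prefixValue_iterate_addOne α M _).trans ?_
  rw [← add_assoc, Nat.add_sub_cancel' hα.le]
  exact Nat.add_modEq_left

lemma exists_halving_digit (hH0 : ∃ᶠ i in atTop, (D.H0 i).Nonempty)
    (hH2 : ∃ᶠ i in atTop, (D.H2 i).Nonempty) {w : ℝ} (hw : w ∈ Set.Icc (0 : ℝ) 1) (M : ℕ) :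
    ∃ i ≥ M, ∃ j : Fin (D.p i), ∃ v ∈ Set.Icc (0 : ℝ) 1,
      ∀ x, |D.lam i j x - w| = |x - v| / 2 := by
  obtain ⟨hw0, hw1⟩ := hw
  rcases le_or_gt w (1 / 2) with hw' | hw'
  · obtain ⟨i, hi, j, hj⟩ := frequently_atTop.mp hH0 M
    refine ⟨i, hi, j, 2 * w, ⟨by linarith, by linarith⟩, fun x => ?_⟩
    rw [show D.lam i j = lam0 from hj, lam0, show x / 2 - w = (x - 2 * w) / 2 by ring, abs_div,
      abs_two]
  · obtain ⟨i, hi, j, hj⟩ := frequently_atTop.mp hH2 M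
    refine ⟨i, hi, j, 2 * w - 1, ⟨by linarith, by linarith⟩, fun x => ?_⟩
    rw [show D.lam i j = lam2 from hj, lam2,
      show x / 2 + 1 / 2 - w = (x - (2 * w - 1)) / 2 by ring, abs_div, abs_two]

/-- Each halving digit at a level `i ≥ M` halves the distance to the target; the levels in between
get a `λ₁`-digit from `ξ`. -/
lemma exists_block_near (hH0 : ∃ᶠ i in atTop, (D.H0 i).Nonempty)
    (hH2 : ∃ᶠ i in atTop, (D.H2 i).Nonempty) {ξ : D.Sigma} {N₀ : ℕ}
    (hξ : ∀ i, N₀ ≤ i → D.lam i (ξ i) = lam1) (k : ℕ) :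
    ∀ w ∈ Set.Icc (0 : ℝ) 1, ∀ M, N₀ ≤ M → ∃ L, ∃ δ : D.Sigma,
      ∀ x ∈ Set.Icc (0 : ℝ) 1, |D.block δ M L x - w| ≤ (1 / 2) ^ k := by
  induction k with
  | zero =>
    rintro w ⟨hw0, hw1⟩ M -
    refine ⟨0, ξ, fun x ⟨hx0, hx1⟩ => ?_⟩
    simp only [block, id, pow_zero, abs_sub_le_iff]
    constructor <;> linarith
  | succ k ih =>
    intro w hw M hM
    obtain ⟨i, hiM, j, v, hv, hjv⟩ := exists_halving_digit hH0 hH2 hw M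
    obtain ⟨L, δ', hδ'⟩ := ih v hv (i + 1) (by omega)
    obtain ⟨d, rfl⟩ := Nat.exists_eq_add_of_le hiM
    obtain ⟨δ, hδ_lt, hδ_eq, hδ_gt⟩ : ∃ δ : D.Sigma,
        (∀ m < M + d, δ m = ξ m) ∧ δ (M + d) = j ∧ ∀ m > M + d, δ m = δ' m :=
      ⟨Function.update (fun m => if m < M + d then ξ m else δ' m) (M + d) j,
        fun m hm => by rw [Function.update_of_ne hm.ne, if_pos hm],
        Function.update_self _ _ _,
        fun m hm => by rw [Function.update_of_ne hm.ne', if_neg (by omega)]⟩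
    have hhead : ∀ y, D.block δ M d y = y := fun y =>
      block_apply_of_fixed fun m hm hmd => by rw [hδ_lt m hmd, hξ m (by omega)]; rfl
    have htail : D.block δ (M + (d + 1)) L = D.block δ' (M + d + 1) L :=
      block_congr fun m hm _ => hδ_gt m (by omega)
    refine ⟨d + 1 + L, δ, fun x hx => ?_⟩
    rw [block_add, htail, block, Function.comp_apply, Function.comp_apply, hhead, hδ_eq, hjv,
      pow_succ]
    linarith [hδ' x hx]

lemma isOpen_cylinder (β : D.Sigma) (M : ℕ) : IsOpen {γ : D.Sigma | ∀ i < M, γ i = β i} := by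
  have : {γ : D.Sigma | ∀ i < M, γ i = β i} = (Set.Iio M).pi fun i => {β i} := by
    ext γ; simp
  rw [this]
  exact isOpen_set_pi (Set.finite_Iio M) fun i _ => isOpen_discrete _

lemma exists_cylinder_subset {β : D.Sigma} {s : Set D.Sigma} (hs : s ∈ 𝓝 β) :
    ∃ M, {γ : D.Sigma | ∀ i < M, γ i = β i} ⊆ s := by
  rw [nhds_pi, Filter.mem_pi] at hs
  obtain ⟨I, hI, t, ht, hsub⟩ := hs
  obtain ⟨b, hb⟩ := hI.bddAbove
  refine ⟨b + 1, fun γ hγ => hsub fun i hi => ?_⟩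
  rw [show γ i = β i from hγ i (Nat.lt_succ_of_le (hb hi))]
  exact mem_of_mem_nhds (ht i)

end FAData

namespace FASystem

open FAData

variable (S : FASystem)

lemma exists_eventually_lam1 :
    ∃ (ξ : S.Sigma) (N : ℕ), ∀ i, N ≤ i → S.lam i (ξ i) = lam1 := by
  obtain ⟨b, hb⟩ := S.Qfin.bddAbove
  have hQ : ∀ i, b < i → (S.Q i).Nonempty := fun i hi =>
    Set.nonempty_iff_ne_empty.2 fun h => (hb h).not_gt hi
  refine ⟨fun i => if h : b < i then (hQ i h).some else S.fin0 i, b + 1, fun i hi => ?_⟩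
  dsimp only
  rw [dif_pos (by omega)]
  exact (hQ i (by omega)).some_mem

lemma coe_T_iterate {x : S.X} {α : S.Sigma} {z : ℝ} (hz : z ∈ Set.Icc (0 : ℝ) 1)
    (hx : (x : S.Sigma × ℝ) = (α, S.phi α z)) (n : ℕ) :
    ((S.T^[n] x : S.X) : S.Sigma × ℝ) = (S.addOne^[n] α, S.phi (S.addOne^[n] α) z) := by
  induction n with
  | zero => exact hx
  | succ n ih =>
    have hTn : S.T^[n] x = ⟨_, phi_mem_X _ hz⟩ := Subtype.ext ih
    rw [Function.iterate_succ_apply', hTn, S.hT _ z _ _ hz (tendsto_lamComp_phi _ z)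
      (tendsto_lamComp_phi _ z), Function.iterate_succ_apply']

/-- If from some level on every map fixes `c`, then `S.phi γ c` only depends on finitely many
digits of `γ`, so the orbit of `(α, S.phi α c)` stays away from `(α, S.phi α z)` whenever the
fibre over `α` is nondegenerate. -/
lemma not_minimal_of_eventually_fixed {c z : ℝ} (hc : c ∈ Set.Icc (0 : ℝ) 1)
    (hz : z ∈ Set.Icc (0 : ℝ) 1) (hcz : c ≠ z) (hfix : ∀ᶠ i in atTop, ∀ j, S.lam i j c = c) :
    ¬ S.Minimal := by
  obtain ⟨ξ, N₀, hξ⟩ := S.exists_eventually_lam1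
  obtain ⟨N₁, hN₁⟩ := eventually_atTop.mp hfix
  set N := max N₀ N₁
  have hphi_c : ∀ γ : S.Sigma, S.phi γ c = S.lamComp γ N c := fun γ =>
    phi_eq_lamComp_of_fixed fun i hi => hN₁ i (le_of_max_le_right hi) _
  have hphi_ξ : ∀ y, S.phi ξ y = S.lamComp ξ N y := fun y =>
    phi_eq_lamComp_of_fixed fun i hi => by rw [hξ i (le_of_max_le_left hi)]; rfl
  have hr : 0 < dist (S.phi ξ z) (S.phi ξ c) := by
    rw [dist_pos, hphi_ξ, hphi_ξ]
    exact (lamComp_isNonexpandingAffine ξ N).strictMono.injective.ne hcz.symm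
  set W : Set (S.Sigma × ℝ) :=
    {γ | ∀ i < N, γ i = ξ i} ×ˢ Metric.ball (S.phi ξ z) (dist (S.phi ξ z) (S.phi ξ c))
  have hW : IsOpen (Subtype.val ⁻¹' W : Set S.X) :=
    ((isOpen_cylinder ξ N).prod Metric.isOpen_ball).preimage continuous_subtype_val
  intro hmin
  obtain ⟨_, hmem, n, rfl⟩ := (hmin ⟨_, phi_mem_X ξ hc⟩).inter_open_nonempty _ hW
    ⟨⟨_, phi_mem_X ξ hz⟩, fun _ _ => rfl, Metric.mem_ball_self hr⟩
  have hmem : ((S.T^[n] ⟨_, phi_mem_X ξ hc⟩ : S.X) : S.Sigma × ℝ) ∈ W := hmem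
  rw [S.coe_T_iterate hc rfl n] at hmem
  obtain ⟨hcyl, hball⟩ := hmem
  rw [Metric.mem_ball, hphi_c, lamComp_congr hcyl, ← hphi_c, dist_comm] at hball
  exact hball.false

lemma exists_iterate_addOne_near (hH0 : ∃ᶠ i in atTop, (S.H0 i).Nonempty)
    (hH2 : ∃ᶠ i in atTop, (S.H2 i).Nonempty) (α : S.Sigma) {z : ℝ}
    (hz : z ∈ Set.Icc (0 : ℝ) 1) (β : S.Sigma) {z' : ℝ} (hz' : z' ∈ Set.Icc (0 : ℝ) 1) (M : ℕ)
    {ε : ℝ} (hε : 0 < ε) :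
    ∃ n, (∀ i < M, (S.addOne^[n] α) i = β i) ∧
      dist (S.phi (S.addOne^[n] α) z) (S.phi β z') < ε := by
  obtain ⟨ξ, N₀, hξ⟩ := S.exists_eventually_lam1
  obtain ⟨k, hk⟩ := exists_pow_lt_of_lt_one hε (by norm_num : (1 / 2 : ℝ) < 1)
  set M' := max M N₀
  obtain ⟨u, hu, hβu⟩ := phi_mem_image_lamComp β hz' M'
  obtain ⟨L, δ, hδ⟩ := exists_block_near hH0 hH2 hξ k u hu M' (le_max_right _ _)
  obtain ⟨n, hn⟩ :=
    exists_iterate_addOne_eq α (fun i => if i < M' then β i else δ i) (M' + L)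
  have hβ : ∀ i < M', (S.addOne^[n] α) i = β i := fun i hi => by
    rw [hn i (by omega), if_pos hi]
  have hδ' : ∀ i, M' ≤ i → i < M' + L → (S.addOne^[n] α) i = δ i := fun i hi hiL => by
    rw [hn i hiL, if_neg (by omega)]
  refine ⟨n, fun i hi => hβ i (by omega), ?_⟩
  obtain ⟨t, ht, hγt⟩ := phi_mem_image_lamComp (S.addOne^[n] α) hz (M' + L)
  rw [← hγt, ← hβu, lamComp_add, lamComp_congr hβ, block_congr hδ', Function.comp_apply]
  calc dist (S.lamComp β M' (S.block δ M' L t)) (S.lamComp β M' u)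
      ≤ dist (S.block δ M' L t) u := by
        simpa using (lamComp_isNonexpandingAffine β M').lipschitzWith.dist_le_mul _ _
    _ ≤ (1 / 2) ^ k := (Real.dist_eq _ _).trans_le (hδ t ht)
    _ < ε := hk

lemma minimal_of_frequently_H0_H2 (hH0 : ∃ᶠ i in atTop, (S.H0 i).Nonempty)
    (hH2 : ∃ᶠ i in atTop, (S.H2 i).Nonempty) : S.Minimal := by
  intro x
  obtain ⟨z, hz, hx⟩ := exists_eq_phi_of_mem_X x.2
  refine dense_iff_inter_open.2 fun U hU ⟨u, hu⟩ => ?_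
  obtain ⟨V, hV, rfl⟩ := isOpen_induced_iff.mp hU
  obtain ⟨z', hz', hu'⟩ := exists_eq_phi_of_mem_X u.2
  have hVu : V ∈ 𝓝 ((u : S.Sigma × ℝ).1, (u : S.Sigma × ℝ).2) := hV.mem_nhds hu
  obtain ⟨s, hs, t, ht, hst⟩ := mem_nhds_prod_iff.mp hVu
  obtain ⟨M, hM⟩ := exists_cylinder_subset hs
  obtain ⟨ε, hε, hball⟩ := Metric.mem_nhds_iff.mp ht
  obtain ⟨n, hcyl, hdist⟩ := S.exists_iterate_addOne_near hH0 hH2 _ hz _ hz' M hε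
  refine ⟨S.T^[n] x, ?_, n, rfl⟩
  change ((S.T^[n] x : S.X) : S.Sigma × ℝ) ∈ V
  rw [S.coe_T_iterate hz (Prod.ext rfl hx) n]
  exact hst ⟨hM hcyl, hball (hu' ▸ hdist)⟩

end FASystem

/-- A Floyd–Auslander system is minimal iff there are infinitely
many `n` with `|H₀(n)| > 0` and infinitely many `m` with `|H₂(m)| > 0`. -/
theorem floyd_auslander_minimal_iff (S : FASystem) :
    S.Minimal ↔
      ({n : ℕ | 0 < (S.toFAData.H0 n).ncard}.Infinite ∧
        {m : ℕ | 0 < (S.toFAData.H2 m).ncard}.Infinite) := by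
  simp only [Set.ncard_pos (Set.toFinite _), ← Nat.frequently_atTop_iff_infinite]
  refine ⟨fun hmin => ⟨?_, ?_⟩, fun h => S.minimal_of_frequently_H0_H2 h.1 h.2⟩
  · by_contra h
    exact S.not_minimal_of_eventually_fixed (by norm_num) (by norm_num) one_ne_zero
      ((not_frequently.mp h).mono fun i hi j => FAData.lam_apply_one fun hj => hi ⟨j, hj⟩) hmin
  · by_contra h
    exact S.not_minimal_of_eventually_fixed (by norm_num) (by norm_num) zero_ne_one
      ((not_frequently.mp h).mono fun i hi j => FAData.lam_apply_zero fun hj => hi ⟨j, hj⟩) hmin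
end
end

section
/- Let (X,σ) be a binary subshift. Then (X,σ) is non-tame if and only if the pair (A₀,A₁) admits an infinite independence set, where A₀ = {(x_n) ∈ X : x₁ = 0} is the 0-cylinder and A₁ = {(x_n) ∈ X : x₁ = 1} is the 1-cylinder. -/
open Filter Topology

noncomputable section

/-!
The map `p ↦ (x ↦ (p x)₀)` is injective on `E(X)` and lands in the pointwise closure of the
coordinate functions `x ↦ xₙ`. Barely continuous functions `X → Bool` (every nonempty closed set
contains a point of continuity of the restriction) are Borel, so there are at most `𝔠` of them.
A limit of coordinates that is not barely continuous takes both values densely on some nonempty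
`F`; approximating it by late coordinates extends a finite set shattered by `F` by one point at a
time, which yields an infinite independence set.

Conversely, by compactness an infinite independence set `J` realises every pattern on all of `J`,
so distinct ultrafilters containing `J` give distinct limits `U-lim σⁿ ∈ E(X)`, and an independent
family of `𝔠` subsets of a countable set provides `2^𝔠` such ultrafilters.
-/

open Set Function Cardinal MeasureTheory

section BarelyContinuous

variable {Y β : Type*} [TopologicalSpace Y] [TopologicalSpace β]

theorem mapClusterPt_atTop_of_mem_closure_range [T1Space Y] {u : ℕ → Y} {y : Y}
    (hy : y ∈ closure (range u)) (hyu : y ∉ range u) : MapClusterPt y atTop u := by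
  rw [mapClusterPt_iff_frequently]
  intro s hs
  rw [Nat.frequently_atTop_iff_infinite]
  intro hfin
  have hnhds : s ∩ (u '' {n | u n ∈ s})ᶜ ∈ 𝓝 y :=
    inter_mem hs ((hfin.image u).isClosed.isOpen_compl.mem_nhds fun ⟨n, _, hn⟩ => hyu ⟨n, hn⟩)
  obtain ⟨_, ⟨hns, hnA⟩, n, rfl⟩ := mem_closure_iff_nhds.1 hy _ hnhds
  exact hnA ⟨n, hns, rfl⟩

theorem continuousWithinAt_iff_eventually_eq [DiscreteTopology β] {g : Y → β} {s : Set Y}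
    {x : Y} : ContinuousWithinAt g s x ↔ ∀ᶠ y in 𝓝[s] x, g y = g x := by
  rw [ContinuousWithinAt, nhds_discrete, tendsto_pure]

def BarelyContinuous (g : Y → β) : Prop :=
  ∀ F : Set Y, IsClosed F → F.Nonempty → ∃ x ∈ F, ContinuousWithinAt g F x

/- The union `V` of the basic open sets on which `g ⁻¹' {b}` is Borel is everything: at a point
of continuity of `g` on `Vᶜ`, a basic neighbourhood would otherwise be added to `V`. -/
theorem BarelyContinuous.measurableSet_preimage [SecondCountableTopology Y] [DiscreteTopology β]
    {g : Y → β} (hg : BarelyContinuous g) (b : β) : MeasurableSet[borel Y] (g ⁻¹' {b}) := by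
  let _ := borel Y
  have _ : BorelSpace Y := ⟨rfl⟩
  set 𝓑 := TopologicalSpace.countableBasis Y
  set V := ⋃ s ∈ {s ∈ 𝓑 | MeasurableSet (s ∩ g ⁻¹' {b})}, s
  have hVopen : IsOpen V :=
    isOpen_biUnion fun s hs => (TopologicalSpace.isBasis_countableBasis Y).isOpen hs.1
  have hVmeas : MeasurableSet (V ∩ g ⁻¹' {b}) := by
    rw [iUnion₂_inter]
    exact .biUnion ((TopologicalSpace.countable_countableBasis Y).mono (sep_subset _ _))
      fun s hs => hs.2
  suffices hV : V = Set.univ by simpa [hV] using hVmeas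
  by_contra hV
  obtain ⟨x, hxV, hx⟩ := hg Vᶜ hVopen.isClosed_compl (nonempty_compl.2 hV)
  obtain ⟨u, hu, hxu, hug⟩ := mem_nhdsWithin.1 (continuousWithinAt_iff_eventually_eq.1 hx)
  obtain ⟨s, hs𝓑, hxs, hsu⟩ :=
    (TopologicalSpace.isBasis_countableBasis Y).exists_subset_of_mem_open hxu hu
  have hsV : s ∩ Vᶜ ∩ g ⁻¹' {b} = s ∩ Vᶜ ∩ {_y | g x = b} := by
    ext y
    refine and_congr_right fun hy => ?_
    rw [mem_preimage, mem_singleton_iff, hug ⟨hsu hy.1, hy.2⟩]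
    rfl
  have hsmeas : MeasurableSet (s ∩ g ⁻¹' {b}) := by
    have : s ∩ g ⁻¹' {b} = s ∩ (V ∩ g ⁻¹' {b}) ∪ s ∩ Vᶜ ∩ g ⁻¹' {b} := by
      ext y; by_cases hy : y ∈ V <;> simp [hy]
    rw [this, hsV]
    have hsopen := (TopologicalSpace.isBasis_countableBasis Y).isOpen hs𝓑
    exact (hsopen.measurableSet.inter hVmeas).union
      ((hsopen.measurableSet.inter hVopen.isClosed_compl.measurableSet).inter (.const _))
  exact hxV (mem_biUnion ⟨hs𝓑, hsmeas⟩ hxs)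

theorem mk_setOf_barelyContinuous_le [SecondCountableTopology Y] :
    #{g : Y → Bool | BarelyContinuous g} ≤ 𝔠 := by
  have hinj : Injective fun g : {g : Y → Bool | BarelyContinuous g} =>
      (⟨g.1 ⁻¹' {true}, g.2.measurableSet_preimage true⟩ : {t | MeasurableSet[borel Y] t}) := by
    intro g g' h
    ext x
    simpa using congrArg (x ∈ ·.1) h
  refine (mk_le_of_injective hinj).trans ?_
  rw [(TopologicalSpace.isBasis_countableBasis Y).borel_eq_generateFrom]
  exact MeasurableSpace.cardinal_measurableSet_le_continuum
    ((le_aleph0_iff_set_countable.2 (TopologicalSpace.countable_countableBasis Y)).trans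
      aleph0_le_continuum)

theorem exists_subset_closure_preimage_of_not_barelyContinuous {g : Y → Bool}
    (hg : ¬BarelyContinuous g) : ∃ F : Set Y, F.Nonempty ∧ ∀ b, F ⊆ closure (F ∩ g ⁻¹' {b}) := by
  simp only [BarelyContinuous, not_forall, not_exists, not_and] at hg
  obtain ⟨F, -, hFne, hF⟩ := hg
  refine ⟨F, hFne, fun b x hx => ?_⟩
  by_contra hxb
  refine hF x hx (continuousWithinAt_iff_eventually_eq.2 ?_)
  filter_upwards [mem_nhdsWithin_of_mem_nhds (isClosed_closure.isOpen_compl.mem_nhds hxb),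
    self_mem_nhdsWithin] with y hy hyF
  have hgy : g y ≠ b := fun h => hy (subset_closure ⟨hyF, h⟩)
  have hgx : g x ≠ b := fun h => hxb (subset_closure ⟨hx, h⟩)
  cases b <;> simp_all

end BarelyContinuous

section IndependentFamily

variable {α : Type*}

/-- Hausdorff's independent family: `indepFamily S` for `S : Set α` are independent subsets of
`Finset α × Finset (Finset α)`, a countable set when `α` is. -/
def indepFamily (S : Set α) : Set (Finset α × Finset (Finset α)) :=
  {d | ∃ t ∈ d.2, (t : Set α) = ↑d.1 ∩ S}

theorem exists_finset_injOn_inter (𝒮 : Finset (Set α)) :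
    ∃ F : Finset α, InjOn (fun S : Set α => (F : Set α) ∩ S) (𝒮 : Set (Set α)) := by
  classical
  cases isEmpty_or_nonempty α
  · exact ⟨∅, fun S _ S' _ _ => Subsingleton.elim S S'⟩
  have hsep : ∀ S S' : Set α, S ≠ S' → ∃ a, ¬(a ∈ S ↔ a ∈ S') :=
    fun S S' h => not_forall.1 (mt Set.ext h)
  choose! sep hsep using hsep
  refine ⟨(𝒮 ×ˢ 𝒮).image fun p => sep p.1 p.2, fun S hS S' hS' h => ?_⟩
  by_contra hne
  have hmem : sep S S' ∈ (𝒮 ×ˢ 𝒮).image fun p => sep p.1 p.2 :=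
    Finset.mem_image.2 ⟨(S, S'), Finset.mem_product.2 ⟨hS, hS'⟩, rfl⟩
  have := congrArg (sep S S' ∈ ·) h
  simp only [mem_inter_iff, Finset.mem_coe, hmem, true_and, eq_iff_iff] at this
  exact hsep S S' hne this

theorem exists_forall_mem_indepFamily_iff (𝒮 : Finset (Set α)) (𝒣 : Set (Set α)) :
    ∃ d, ∀ S ∈ 𝒮, d ∈ indepFamily S ↔ S ∈ 𝒣 := by
  classical
  obtain ⟨F, hF⟩ := exists_finset_injOn_inter 𝒮
  refine ⟨(F, (𝒮.filter (· ∈ 𝒣)).image fun S => F.filter (· ∈ S)), fun S hS => ?_⟩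
  simp only [indepFamily, mem_ofPred_eq, Finset.mem_image, Finset.mem_filter]
  constructor
  · rintro ⟨_, ⟨S', ⟨hS', hS'𝒣⟩, rfl⟩, h⟩
    rwa [← hF hS' hS (show (F : Set α) ∩ S' = (F : Set α) ∩ S by rw [← h]; ext; simp)]
  · exact fun h𝒣 => ⟨_, ⟨S, ⟨hS, h𝒣⟩, rfl⟩, by ext; simp⟩

theorem exists_ultrafilter_indepFamily_mem_iff (𝒣 : Set (Set α)) :
    ∃ U : Ultrafilter (Finset α × Finset (Finset α)), ∀ S, indepFamily S ∈ U ↔ S ∈ 𝒣 := by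
  classical
  let B S := if S ∈ 𝒣 then indepFamily S else (indepFamily S)ᶜ
  obtain ⟨U, hU⟩ := Ultrafilter.exists_ultrafilter_of_finite_inter_nonempty (range B) (by
    intro T hT
    rw [← image_univ, Finset.subset_set_image_iff] at hT
    obtain ⟨𝒮, -, rfl⟩ := hT
    obtain ⟨d, hd⟩ := exists_forall_mem_indepFamily_iff 𝒮 𝒣
    refine ⟨d, ?_⟩
    simp only [Finset.coe_image, sInter_image, mem_iInter₂, Finset.mem_coe]
    intro S hS
    by_cases h : S ∈ 𝒣 <;> simp [B, h, hd S hS])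
  refine ⟨U, fun S => ⟨fun hS => by_contra fun h => ?_, fun h => ?_⟩⟩
  · have : (indepFamily S)ᶜ ∈ U := by simpa [B, h] using hU (mem_range_self S)
    exact U.compl_mem_iff_notMem.1 this hS
  · simpa [B, h] using hU (mem_range_self S)

theorem continuum_lt_mk_ultrafilter_mem {J : Set ℕ} (hJ : J.Infinite) :
    𝔠 < #{U : Ultrafilter ℕ // J ∈ U} := by
  let η : Finset ℕ × Finset (Finset ℕ) → ℕ := fun d => hJ.natEmbedding J (Encodable.encode d)
  have hη : Injective η := fun d d' h =>
    Encodable.encode_injective ((hJ.natEmbedding J).injective (Subtype.ext h))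
  have hηJ : range η ⊆ J := range_subset_iff.2 fun d => (hJ.natEmbedding J _).2
  choose U hU using exists_ultrafilter_indepFamily_mem_iff (α := ℕ)
  have hmap : ∀ (V : Ultrafilter _) (S : Set ℕ), η '' indepFamily S ∈ V.map η ↔ indepFamily S ∈ V :=
    fun V S => by rw [Ultrafilter.mem_map, hη.preimage_image]
  have hinj : Injective fun 𝒣 : Set (Set ℕ) =>
      (⟨(U 𝒣).map η, Ultrafilter.mem_map.2 (by rw [preimage_eq_univ_iff.2 hηJ]; exact univ_mem)⟩ :
        {U : Ultrafilter ℕ // J ∈ U}) := by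
    intro 𝒣 𝒣' h
    have h' : (U 𝒣).map η = (U 𝒣').map η := congrArg Subtype.val h
    ext S
    rw [← hU, ← hU, ← hmap, ← hmap, h']
  calc 𝔠 < 2 ^ 𝔠 := cantor _
    _ = #(Set (Set ℕ)) := by rw [mk_set, mk_set_nat]
    _ ≤ _ := mk_le_of_injective hinj

end IndependentFamily

theorem exists_infinite_of_forall_exists_insert {α : Type*} [DecidableEq α] {P : Finset α → Prop}
    (h0 : P ∅) (hins : ∀ T, P T → ∃ N ∉ T, P (insert N T)) :
    ∃ J : Set α, J.Infinite ∧ ∀ I : Finset α, ↑I ⊆ J → ∃ T, I ⊆ T ∧ P T := by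
  have : Nonempty α := let ⟨N, _⟩ := hins ∅ h0; ⟨N⟩
  choose! next hnext hPnext using hins
  let T : ℕ → Finset α := fun k => (fun T => insert (next T) T)^[k] ∅
  have hsucc : ∀ k, T (k + 1) = insert (next (T k)) (T k) :=
    fun k => iterate_succ_apply' _ _ _
  have hP : ∀ k, P (T k) := fun k => by
    induction k with
    | zero => exact h0
    | succ k ih => rw [hsucc]; exact hPnext _ ih
  have hcard : ∀ k, (T k).card = k := fun k => by
    induction k with
    | zero => rfl
    | succ k ih => rw [hsucc, Finset.card_insert_of_notMem (hnext _ (hP k)), ih]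
  have hmono : Monotone fun k => (T k : Set α) := monotone_nat_of_le_succ fun k => by
    rw [hsucc, Finset.coe_insert]; exact subset_insert _ _
  refine ⟨⋃ k, ↑(T k), fun hfin => ?_, fun I hI => ?_⟩
  · have hle := Finset.card_le_card
      (show T (hfin.toFinset.card + 1) ⊆ hfin.toFinset from fun a ha => by simpa using ⟨_, ha⟩)
    rw [hcard] at hle
    omega
  · obtain ⟨k, hk⟩ := hmono.directed_le.exists_mem_subset_of_finset_subset_biUnion hI
    exact ⟨T k, Finset.coe_subset.1 hk, hP k⟩

def Shatters (F : Set BinSeq) (T : Finset ℕ) : Prop :=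
  ∀ φ : ℕ → Bool, ∃ x ∈ F, ∀ t ∈ T, x t = φ t

theorem Shatters.mono {F F' : Set BinSeq} {T T' : Finset ℕ} (h : Shatters F T) (hF : F ⊆ F')
    (hT : T' ⊆ T) : Shatters F' T' := fun φ =>
  let ⟨x, hx, hxφ⟩ := h φ
  ⟨x, hF hx, fun t ht => hxφ t (hT ht)⟩

theorem IsClosed.exists_forall_eq_of_shatters {C : Set BinSeq} (hC : IsClosed C) {J : Set ℕ}
    (hJ : ∀ I : Finset ℕ, ↑I ⊆ J → Shatters C I) (φ : ℕ → Bool) :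
    ∃ x ∈ C, ∀ n ∈ J, x n = φ n := by
  classical
  let Z : Finset ℕ → Set BinSeq := fun I => C ∩ {x | ∀ i ∈ I, i ∈ J → x i = φ i}
  have hZclosed : ∀ I, IsClosed (Z I) := fun I => by
    simp only [Z, ofPred_forall]
    exact hC.inter (isClosed_iInter fun i => isClosed_iInter fun _ => isClosed_iInter fun _ =>
      isClosed_eq (continuous_apply i) continuous_const)
  have hZne : ∀ I, (Z I).Nonempty := fun I => by
    obtain ⟨x, hx, hxφ⟩ := hJ (I.filter (· ∈ J)) (by intro i; simp +contextual) φ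
    exact ⟨x, hx, fun i hi hiJ => hxφ i (Finset.mem_filter.2 ⟨hi, hiJ⟩)⟩
  have hZanti : Antitone Z := fun I I' h x hx => ⟨hx.1, fun i hi => hx.2 i (h hi)⟩
  obtain ⟨x, hx⟩ := IsCompact.nonempty_iInter_of_directed_nonempty_isCompact_isClosed Z
    hZanti.directed_ge hZne (fun I => (hZclosed I).isCompact) hZclosed
  rw [mem_iInter] at hx
  exact ⟨x, (hx ∅).1, fun n hn => (hx {n}).2 n (Finset.mem_singleton_self n) hn⟩

theorem binShift_iterate_apply (i : ℕ) (x : BinSeq) (n : ℕ) : binShift^[i] x n = x (n + i) := by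
  induction i generalizing x with
  | zero => rfl
  | succ i ih => rw [iterate_succ_apply, ih, binShift, add_assoc]

namespace BinarySubshift

variable (X : BinarySubshift)

instance inst_s3 : CompactSpace X.carrier := isCompact_iff_compactSpace.1 X.isClosed.isCompact

theorem coe_S_iterate_apply (n : ℕ) (x : X.carrier) (k : ℕ) :
    (X.S^[n] x).1 k = x.1 (k + n) :=
  (congrFun ((Semiconj.iterate_right (f := Subtype.val) (fun _ => rfl) n) x) k).trans
    (binShift_iterate_apply n x.1 k)

theorem isIndependenceSet_cylinders_iff {J : Set ℕ} :
    IsIndependenceSet X.carrier {x ∈ X.carrier | x 0 = false} {x ∈ X.carrier | x 0 = true} J ↔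
      ∀ I : Finset ℕ, ↑I ⊆ J → Shatters X.carrier I := by
  have key : ∀ x ∈ X.carrier, ∀ i b, binShift^[i] x ∈
      (if b = true then {x ∈ X.carrier | x 0 = true} else {x ∈ X.carrier | x 0 = false}) ↔
        x i = b := fun x hx i b => by
    have := MapsTo.iterate (fun y hy => X.shift_mem y hy) i hx
    cases b <;> simp [binShift_iterate_apply, this]
  exact forall₂_congr fun I _ => forall_congr' fun φ => exists_congr fun x =>
    and_congr_right fun hx => forall₂_congr fun i _ => key x hx i (φ i)

def coord (n : ℕ) (x : X.carrier) : Bool := x.1 n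

theorem continuous_coord (n : ℕ) : Continuous (X.coord n) :=
  (continuous_apply n).comp continuous_subtype_val

theorem continuous_coord_comp (n : ℕ) :
    Continuous fun p : X.carrier → X.carrier => X.coord n ∘ p :=
  continuous_pi fun x => (X.continuous_coord n).comp (continuous_apply x)

theorem coord_comp_eq_of_mem_ellis {p : X.carrier → X.carrier} (hp : p ∈ X.Ellis) (k : ℕ) :
    X.coord k ∘ p = X.coord 0 ∘ p ∘ X.S^[k] := by
  refine closure_minimal ?_ (isClosed_eq (X.continuous_coord_comp k)
    ((X.continuous_coord_comp 0).comp (continuous_pi fun x => continuous_apply _))) hp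
  rintro _ ⟨n, rfl⟩
  funext x
  simp only [comp_apply, coord, coe_S_iterate_apply]
  ring_nf

theorem injOn_coord_zero_comp_ellis : InjOn (X.coord 0 ∘ ·) X.Ellis := by
  intro p hp p' hp' h
  funext x
  refine Subtype.ext (funext fun k => ?_)
  calc (p x).1 k = (X.coord 0 ∘ p) (X.S^[k] x) := congrFun (X.coord_comp_eq_of_mem_ellis hp k) x
    _ = (X.coord 0 ∘ p') (X.S^[k] x) := congrFun h _
    _ = (p' x).1 k := (congrFun (X.coord_comp_eq_of_mem_ellis hp' k) x).symm

theorem mapsTo_coord_zero_comp_ellis :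
    MapsTo (X.coord 0 ∘ ·) X.Ellis (closure (range X.coord)) := fun _ hp =>
  map_mem_closure (X.continuous_coord_comp 0) hp (by
    rintro _ ⟨n, rfl⟩
    exact ⟨n + 1, funext fun x => by simp only [comp_apply, coord, coe_S_iterate_apply, zero_add]⟩)

def ultrafilterLim (U : Ultrafilter ℕ) : X.carrier → X.carrier :=
  (U.map fun n => X.S^[n]).lim

theorem tendsto_ultrafilterLim (U : Ultrafilter ℕ) :
    Tendsto (fun n => X.S^[n]) U (𝓝 (X.ultrafilterLim U)) := by
  rw [ultrafilterLim, Tendsto, ← Ultrafilter.coe_map]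
  exact Ultrafilter.le_nhds_lim _

theorem ultrafilterLim_mem_ellis {U : Ultrafilter ℕ} (hU : ∀ᶠ n in U, n ≠ 0) :
    X.ultrafilterLim U ∈ X.Ellis :=
  mem_closure_of_tendsto (X.tendsto_ultrafilterLim U) (hU.mono fun n hn =>
    ⟨n - 1, by simp only; rw [Nat.sub_add_cancel (Nat.one_le_iff_ne_zero.2 hn)]⟩)

theorem ultrafilterLim_apply_zero {U : Ultrafilter ℕ} {x : X.carrier} {b : Bool}
    (hx : ∀ᶠ n in U, x.1 n = b) : (X.ultrafilterLim U x).1 0 = b := by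
  have ht := ((X.continuous_coord 0).tendsto _).comp
    ((continuous_apply x).continuousAt.tendsto.comp (X.tendsto_ultrafilterLim U))
  refine tendsto_nhds_unique ht (tendsto_const_nhds.congr' (hx.mono fun n hn => ?_))
  simp [coord, coe_S_iterate_apply, hn]

theorem injOn_ultrafilterLim {J : Set ℕ} (hJ : ∀ I : Finset ℕ, ↑I ⊆ J → Shatters X.carrier I) :
    InjOn X.ultrafilterLim {U | J ∈ U} := by
  classical
  intro U hU V hV h
  by_contra hne
  obtain ⟨A, hAU, hAV⟩ : ∃ A ∈ U, A ∉ V := by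
    by_contra! H
    exact hne (Ultrafilter.coe_injective (U.unique fun s hs => H s hs).symm)
  obtain ⟨x, hx, hxA⟩ := X.isClosed.exists_forall_eq_of_shatters hJ fun n => decide (n ∈ A)
  have hU1 : (X.ultrafilterLim U ⟨x, hx⟩).1 0 = true :=
    X.ultrafilterLim_apply_zero (Filter.mem_of_superset (inter_mem hU hAU)
      fun n hn => by simp [hxA n hn.1, hn.2])
  have hV0 : (X.ultrafilterLim V ⟨x, hx⟩).1 0 = false :=
    X.ultrafilterLim_apply_zero (Filter.mem_of_superset
      (inter_mem hV (V.compl_mem_iff_notMem.2 hAV)) fun n hn => by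
        simp [hxA n hn.1, show n ∉ A from hn.2])
  rw [h, hV0] at hU1
  exact Bool.false_ne_true hU1

theorem nonTame_of_shatters {J : Set ℕ} (hJ : J.Infinite)
    (hsh : ∀ I : Finset ℕ, ↑I ⊆ J → Shatters X.carrier I) : X.NonTame := by
  have hJ' : (J \ {0}).Infinite := hJ.sdiff (finite_singleton 0)
  let Ψ : {U : Ultrafilter ℕ // J \ {0} ∈ U} → X.Ellis := fun U =>
    ⟨X.ultrafilterLim U, X.ultrafilterLim_mem_ellis (Filter.mem_of_superset U.2 fun _ hn => hn.2)⟩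
  have hΨ : Injective Ψ := fun U V h => Subtype.ext <| X.injOn_ultrafilterLim
    (fun I hI => hsh I (hI.trans sdiff_subset)) U.2 V.2 (congrArg Subtype.val h)
  exact (continuum_lt_mk_ultrafilter_mem hJ').trans_le (mk_le_of_injective hΨ)

/- Pick, for every pattern on `T` and every value `b`, a witness in `F` with that pattern where
`g = b`; a coordinate `N` close enough to `g` agrees with `g` at all these witnesses. -/
theorem exists_shatters_insert {g : X.carrier → Bool} (hg : MapClusterPt g atTop X.coord)
    {F : Set X.carrier} (hF : ∀ b, F ⊆ closure (F ∩ g ⁻¹' {b})) {T : Finset ℕ}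
    (hT : Shatters (Subtype.val '' F) T) : ∃ N ∉ T, Shatters (Subtype.val '' F) (insert N T) := by
  have hw : ∀ (ψ : T → Bool) (b : Bool), ∃ y ∈ F, (∀ t : T, y.1 t = ψ t) ∧ g y = b := by
    intro ψ b
    obtain ⟨_, ⟨z, hzF, rfl⟩, hz⟩ := hT fun n => if h : n ∈ T then ψ ⟨n, h⟩ else false
    have hopen : IsOpen {y : X.carrier | ∀ t : T, y.1 t = ψ t} := by
      simp only [ofPred_forall]
      exact isOpen_iInter_of_finite fun t =>
        (isOpen_discrete {ψ t}).preimage (X.continuous_coord t)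
    obtain ⟨y, hyU, hyF, hgy⟩ :=
      mem_closure_iff.1 (hF b hzF) _ hopen fun t => by simpa using hz t t.2
    exact ⟨y, hyF, hyU, hgy⟩
  choose y hyF hyψ hgy using hw
  have hO : IsOpen {h : X.carrier → Bool | ∀ ψ b, h (y ψ b) = b} := by
    simp only [ofPred_forall]
    exact isOpen_iInter_of_finite fun ψ => isOpen_iInter_of_finite fun b =>
      (isOpen_discrete {b}).preimage (continuous_apply (A := fun _ : X.carrier => Bool) (y ψ b))
  obtain ⟨N, hN, hNO⟩ := (hg.frequently (hO.mem_nhds fun ψ b => hgy ψ b)).forall_exists_of_atTop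
    (T.sup id + 1)
  refine ⟨N, fun hNT => by have := T.le_sup (f := id) hNT; simp at this; omega, fun φ =>
    ⟨y (fun t => φ t) (φ N), ⟨_, hyF _ _, rfl⟩, fun t ht => ?_⟩⟩
  rcases Finset.mem_insert.1 ht with rfl | htT
  · exact hNO _ _
  · exact hyψ _ _ ⟨t, htT⟩

theorem exists_shatters_of_not_barelyContinuous {g : X.carrier → Bool}
    (hg : MapClusterPt g atTop X.coord) (hbc : ¬BarelyContinuous g) :
    ∃ J : Set ℕ, J.Infinite ∧ ∀ I : Finset ℕ, ↑I ⊆ J → Shatters X.carrier I := by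
  obtain ⟨F, ⟨x, hx⟩, hF⟩ := exists_subset_closure_preimage_of_not_barelyContinuous hbc
  obtain ⟨J, hJ, hJT⟩ := exists_infinite_of_forall_exists_insert
    (fun _ => ⟨x.1, mem_image_of_mem _ hx, by simp⟩) fun T hT => X.exists_shatters_insert hg hF hT
  refine ⟨J, hJ, fun I hI => ?_⟩
  obtain ⟨T, hIT, hT⟩ := hJT I hI
  exact hT.mono (image_subset_iff.2 fun x _ => x.2) hIT

theorem exists_shatters_of_nonTame (h : X.NonTame) :
    ∃ J : Set ℕ, J.Infinite ∧ ∀ I : Finset ℕ, ↑I ⊆ J → Shatters X.carrier I := by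
  by_contra hJ
  have hsub : closure (range X.coord) ⊆ range X.coord ∪ {g | BarelyContinuous g} := by
    intro g hg
    by_cases hr : g ∈ range X.coord
    · exact .inl hr
    · exact .inr (by_contra fun hbc => hJ (X.exists_shatters_of_not_barelyContinuous
        (mapClusterPt_atTop_of_mem_closure_range hg hr) hbc))
  refine h.not_ge ?_
  calc #X.Ellis ≤ #(closure (range X.coord)) :=
        mk_le_of_injective ((X.mapsTo_coord_zero_comp_ellis.restrict_inj).2
          X.injOn_coord_zero_comp_ellis)
    _ ≤ #(range X.coord) + #{g : X.carrier → Bool | BarelyContinuous g} :=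
        (mk_le_mk_of_subset hsub).trans (mk_union_le _ _)
    _ ≤ 𝔠 + 𝔠 := add_le_add (mk_range_le.trans (by simp [aleph0_le_continuum]))
        mk_setOf_barelyContinuous_le
    _ = 𝔠 := continuum_add_self

end BinarySubshift

/-- A binary subshift is non-tame iff the pair of cylinders
`(A₀, A₁)` admits an infinite independence set. -/
theorem subshift_nontame_iff_independence (X : BinarySubshift) :
    X.NonTame ↔ ∃ Jset : Set ℕ, Jset.Infinite ∧
      IsIndependenceSet X.carrier
        {x ∈ X.carrier | x 0 = false} {x ∈ X.carrier | x 0 = true} Jset := by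
  simp only [X.isIndependenceSet_cylinders_iff]
  exact ⟨X.exists_shatters_of_nonTame, fun ⟨_, hJ, hsh⟩ => X.nonTame_of_shatters hJ hsh⟩
end
end

section
/- If 𝒯 is a maximal choice domain of the full binary shift ({0,1}^ℕ, σ), then 𝒯 is uncountable. -/
open Filter Topology

noncomputable section

section AuxMCD

/-- Requirements: a pattern size `m`, finitely many distinct points of `𝒯`, choice
functions for them and one extra choice function (for the new point). -/
def Req (𝒯 : Set BinSeq) : Type :=
  Σ mn : ℕ × ℕ, {x : Fin mn.2 → 𝒯 // Function.Injective x} ×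
    (Fin mn.2 → Fin mn.1 → Bool) × (Fin mn.1 → Bool)

variable {𝒯 : Set BinSeq}

def Req.m (r : Req 𝒯) : ℕ := r.1.1
def Req.pts (r : Req 𝒯) : Fin r.1.2 → BinSeq := fun i => (r.2.1.1 i : BinSeq)
def Req.phi (r : Req 𝒯) : Fin r.1.2 → Fin r.1.1 → Bool := r.2.2.1
def Req.psi (r : Req 𝒯) : Fin r.1.1 → Bool := r.2.2.2

lemma Req.pts_mem (r : Req 𝒯) (i : Fin r.1.2) : r.pts i ∈ 𝒯 := (r.2.1.1 i).2
lemma Req.pts_inj (r : Req 𝒯) : Function.Injective r.pts :=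
  fun a b h => r.2.1.2 (Subtype.val_injective h)

/-- Times can be taken beyond any bound `p`. -/
lemma bigTimes (hcd : IsChoiceDomain 𝒯) (p m n : ℕ) (x : Fin n → BinSeq)
    (hx : ∀ i, x i ∈ 𝒯) (hinj : Function.Injective x) (φ : Fin n → Fin m → Bool) :
    ∃ τ : Fin m → ℕ, StrictMono τ ∧ (∀ k, p < τ k) ∧ ∀ i k, x i (τ k) = φ i k := by
  obtain ⟨τ', hsm, hgt, hval⟩ := hcd (m + p) n x hx hinj
    (fun i k => if h : p ≤ (k : ℕ) then φ i ⟨(k : ℕ) - p, by omega⟩ else false)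
  refine ⟨fun k => τ' ⟨p + (k : ℕ), by omega⟩, ?_, ?_, ?_⟩
  · intro a b hab
    have hab' : (a : ℕ) < b := hab
    exact hsm (Fin.mk_lt_mk.mpr (by omega))
  · intro k
    exact lt_of_le_of_lt (Nat.le_add_left p m) (hgt _)
  · intro i k
    have h := hval i ⟨p + (k : ℕ), by omega⟩
    rw [h, dif_pos (Nat.le_add_right p _)]
    congr 1
    exact Fin.ext (show p + (k : ℕ) - p = (k : ℕ) by omega)
variable (hcd : IsChoiceDomain 𝒯) (f : ℕ → Req 𝒯) (e : ℕ → BinSeq)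

/-- The times chosen at stage `t`, given that the construction has reached position `p`. -/
def tauAt (p t : ℕ) : Fin (f t).m → ℕ :=
  (bigTimes hcd (max p (f t).m) (f t).m _ (f t).pts (f t).pts_mem (f t).pts_inj
    (f t).phi).choose

lemma tauAt_spec (p t : ℕ) :
    StrictMono (tauAt hcd f p t) ∧ (∀ k, max p (f t).m < tauAt hcd f p t k) ∧
      ∀ i k, (f t).pts i (tauAt hcd f p t k) = (f t).phi i k :=
  (bigTimes hcd (max p (f t).m) (f t).m _ (f t).pts (f t).pts_mem (f t).pts_inj
    (f t).phi).choose_spec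

/-- Starting positions of the stages. -/
def Pfun : ℕ → ℕ
  | 0 => 0
  | t + 1 => (Finset.univ.sup (tauAt hcd f (Pfun t) t)) + Pfun t + 2

def Tau (t : ℕ) : Fin (f t).m → ℕ := tauAt hcd f (Pfun hcd f t) t

lemma Tau_lt_next (t : ℕ) (k : Fin (f t).m) : Tau hcd f t k < Pfun hcd f (t + 1) := by
  have h := Finset.le_sup (f := tauAt hcd f (Pfun hcd f t) t) (Finset.mem_univ k)
  show tauAt hcd f (Pfun hcd f t) t k < _
  simp only [Pfun]
  omega

lemma Pfun_lt_succ (t : ℕ) : Pfun hcd f t < Pfun hcd f (t + 1) := by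
  simp only [Pfun]; omega

lemma Pfun_mono : StrictMono (Pfun hcd f) :=
  strictMono_nat_of_lt_succ (Pfun_lt_succ hcd f)

lemma le_Pfun (t : ℕ) : t ≤ Pfun hcd f t := by
  induction t with
  | zero => simp [Pfun]
  | succ t ih => have := Pfun_lt_succ hcd f t; omega

def stageOf (q : ℕ) : ℕ := Nat.findGreatest (fun t => Pfun hcd f t ≤ q) q

lemma stageOf_eq (t q : ℕ) (h1 : Pfun hcd f t ≤ q) (h2 : q < Pfun hcd f (t + 1)) :
    stageOf hcd f q = t := by
  have htq : t ≤ q := le_trans (le_Pfun hcd f t) h1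
  have hspec : Pfun hcd f (stageOf hcd f q) ≤ q := by
    unfold stageOf
    exact Nat.findGreatest_spec (P := fun s => Pfun hcd f s ≤ q) (m := t) htq h1
  refine le_antisymm ?_ (Nat.le_findGreatest htq h1)
  by_contra hlt
  push_neg at hlt
  have : Pfun hcd f (t + 1) ≤ Pfun hcd f (stageOf hcd f q) :=
    (Pfun_mono hcd f).le_iff_le.mpr (by omega)
  omega

open Classical in
def psiAt (t q : ℕ) : Bool :=
  if h : ∃ k, Tau hcd f t k = q then (f t).psi h.choose else false

/-- The new point. -/
def yfun (q : ℕ) : Bool :=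
  if q = Pfun hcd f (stageOf hcd f q) then !(e (stageOf hcd f q) q)
  else psiAt hcd f (stageOf hcd f q) q

lemma Tau_gt (t : ℕ) (k : Fin (f t).m) : max (Pfun hcd f t) (f t).m < Tau hcd f t k :=
  (tauAt_spec hcd f (Pfun hcd f t) t).2.1 k

lemma yfun_at_P (t : ℕ) : yfun hcd f e (Pfun hcd f t) = !(e t (Pfun hcd f t)) := by
  have hst : stageOf hcd f (Pfun hcd f t) = t :=
    stageOf_eq hcd f t _ le_rfl (Pfun_lt_succ hcd f t)
  rw [yfun, hst, if_pos rfl]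

lemma psiAt_at_Tau (t : ℕ) (k : Fin (f t).m) :
    psiAt hcd f t (Tau hcd f t k) = (f t).psi k := by
  rw [psiAt, dif_pos ⟨k, rfl⟩]
  congr 1
  exact (tauAt_spec hcd f (Pfun hcd f t) t).1.injective
    (Exists.choose_spec (⟨k, rfl⟩ : ∃ k', Tau hcd f t k' = Tau hcd f t k))

lemma yfun_at_Tau (t : ℕ) (k : Fin (f t).m) :
    yfun hcd f e (Tau hcd f t k) = (f t).psi k := by
  have hgt : Pfun hcd f t < Tau hcd f t k := lt_of_le_of_lt (le_max_left _ _) (Tau_gt hcd f t k)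
  have hst : stageOf hcd f (Tau hcd f t k) = t :=
    stageOf_eq hcd f t _ hgt.le (Tau_lt_next hcd f t k)
  rw [yfun, hst, if_neg (by omega)]
  exact psiAt_at_Tau hcd f t k

/-- Each stage's requirement is realised by the constructed point together with the
prescribed points of `𝒯`. -/
lemma stage_realizes (t : ℕ) :
    ∃ τ : Fin (f t).m → ℕ, StrictMono τ ∧ (∀ k, (f t).m < τ k) ∧
      (∀ i k, (f t).pts i (τ k) = (f t).phi i k) ∧
      ∀ k, yfun hcd f e (τ k) = (f t).psi k := by
  obtain ⟨hsm, hgt, hval⟩ := tauAt_spec hcd f (Pfun hcd f t) t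
  exact ⟨Tau hcd f t, hsm, fun k => lt_of_le_of_lt (le_max_right _ _) (hgt k), hval,
    fun k => yfun_at_Tau hcd f e t k⟩

end AuxMCD

/-- A maximal choice domain of the full binary shift is
uncountable. -/
theorem maximal_choice_domain_uncountable (𝒯 : Set BinSeq)
    (hcd : IsChoiceDomain 𝒯)
    (hmax : ∀ 𝒯' : Set BinSeq, IsChoiceDomain 𝒯' → 𝒯 ⊆ 𝒯' → 𝒯 = 𝒯') :
    ¬𝒯.Countable := by
  intro hC
  obtain ⟨e, he⟩ : ∃ e : ℕ → BinSeq, 𝒯 ⊆ Set.range e := by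
    rcases 𝒯.eq_empty_or_nonempty with h | h
    · exact ⟨fun _ _ => false, by simp [h]⟩
    · obtain ⟨e, he⟩ := hC.exists_eq_range h
      exact ⟨e, he.le⟩
  obtain ⟨f, hf⟩ : ∃ f : ℕ → Req 𝒯, Function.Surjective f := by
    have := hC.to_subtype
    have : Countable (Req 𝒯) := by unfold Req; infer_instance
    have : Nonempty (Req 𝒯) :=
      ⟨⟨(0, 0), ⟨fun i => i.elim0, fun i => i.elim0⟩, fun i => i.elim0, fun k => k.elim0⟩⟩
    exact exists_surjective_nat _
  set y : BinSeq := yfun hcd f e with hy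
  have hynot : y ∉ 𝒯 := by
    intro hmem
    obtain ⟨t, ht⟩ := he hmem
    have hP := yfun_at_P hcd f e t
    rw [← hy, ← ht] at hP
    simp at hP
  have hcd' : IsChoiceDomain (insert y 𝒯) := by
    intro m n x hx hinj φ
    by_cases hall : ∀ i, x i ∈ 𝒯
    · exact hcd m n x hall hinj φ
    · push_neg at hall
      obtain ⟨i₀, hi₀⟩ := hall
      have hxy : x i₀ = y := by
        rcases hx i₀ with h | h
        · exact h
        · exact absurd h hi₀
      cases n with
      | zero => exact i₀.elim0
      | succ n' =>
        have hmem : ∀ j : Fin n', x (i₀.succAbove j) ∈ 𝒯 := by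
          intro j
          rcases hx (i₀.succAbove j) with h | h
          · exact absurd (hinj (h.trans hxy.symm)) (Fin.succAbove_ne i₀ j)
          · exact h
        set r : Req 𝒯 := ⟨(m, n'), ⟨fun j => ⟨x (i₀.succAbove j), hmem j⟩,
            fun a b hab =>
              Fin.succAbove_right_injective (hinj (congrArg Subtype.val hab))⟩,
          fun j k => φ (i₀.succAbove j) k, fun k => φ i₀ k⟩ with hr
        obtain ⟨t, ht⟩ := hf r
        have hlem := stage_realizes hcd f e t
        rw [ht] at hlem
        obtain ⟨τ, h1, h2, h3, h4⟩ := hlem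
        refine ⟨τ, h1, h2, ?_⟩
        intro i k
        by_cases hii : i = i₀
        · subst hii
          rw [hxy, hy]
          exact h4 k
        · obtain ⟨j, hj⟩ := Fin.exists_succAbove_eq hii
          rw [← hj]
          exact h3 j k
  have heq := hmax (insert y 𝒯) hcd' (Set.subset_insert y 𝒯)
  apply hynot
  rw [heq]
  exact Set.mem_insert y 𝒯
end
end

section
/- Let (X,T) be a Floyd–Auslander system. For any idempotent f ∈ J(X) and any α ∈ Σ, either the restriction of f to the fibre L_α is the identity on L_α, or f(L_α) is a single point (α,z) for some z with (α,z) ∈ L_α. -/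
open Filter Topology

noncomputable section

section Aux

open FAData

lemma aux_lam_affine (D : FAData) (n : ℕ) (j : Fin (D.p n)) (z : ℝ) :
    D.lam n j z = D.lam n j 0 + z * (D.lam n j 1 - D.lam n j 0) := by
  rcases D.hlam n j with h | h | h <;> rw [h] <;> simp only [lam0, lam1, lam2] <;> ring

lemma aux_lam_mono (D : FAData) (n : ℕ) (j : Fin (D.p n)) : Monotone (D.lam n j) := by
  rcases D.hlam n j with h | h | h <;> rw [h] <;> intro x y hxy <;>
    simp only [lam0, lam1, lam2] <;> linarith

lemma aux_lam_mem (D : FAData) (n : ℕ) (j : Fin (D.p n)) {z : ℝ}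
    (hz : z ∈ Set.Icc (0:ℝ) 1) : D.lam n j z ∈ Set.Icc (0:ℝ) 1 := by
  obtain ⟨h0, h1⟩ := hz
  rcases D.hlam n j with h | h | h <;> rw [h] <;>
    simp only [lam0, lam1, lam2, Set.mem_Icc] <;> constructor <;> linarith

lemma aux_lamComp_zero (D : FAData) (α : D.Sigma) (z : ℝ) : D.lamComp α 0 z = z := rfl

lemma aux_lamComp_succ (D : FAData) (α : D.Sigma) (n : ℕ) (z : ℝ) :
    D.lamComp α (n+1) z = D.lamComp α n (D.lam n (α n) z) := rfl

lemma aux_lamComp_mono (D : FAData) (α : D.Sigma) (n : ℕ) : Monotone (D.lamComp α n) := by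
  induction n with
  | zero => exact monotone_id
  | succ n ih =>
    intro x y hxy
    rw [aux_lamComp_succ, aux_lamComp_succ]
    exact ih (aux_lam_mono D n (α n) hxy)

lemma aux_lamComp_mem (D : FAData) (α : D.Sigma) (n : ℕ) {z : ℝ}
    (hz : z ∈ Set.Icc (0:ℝ) 1) : D.lamComp α n z ∈ Set.Icc (0:ℝ) 1 := by
  induction n generalizing z with
  | zero => exact hz
  | succ n ih =>
    rw [aux_lamComp_succ]
    exact ih (aux_lam_mem D n (α n) hz)

lemma aux_lamComp_affine (D : FAData) (α : D.Sigma) (n : ℕ) (z : ℝ) :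
    D.lamComp α n z = D.lamComp α n 0 + z * (D.lamComp α n 1 - D.lamComp α n 0) := by
  induction n generalizing z with
  | zero => simp only [aux_lamComp_zero]; ring
  | succ n ih =>
    have h := ih (D.lam n (α n) z)
    have h0 := ih (D.lam n (α n) 0)
    have h1 := ih (D.lam n (α n) 1)
    rw [aux_lamComp_succ, aux_lamComp_succ, aux_lamComp_succ, h, h0, h1,
      aux_lam_affine D n (α n) z]
    ring

/-- Lower endpoint of the fibre over `α`. -/
noncomputable def flo (D : FAData) (α : D.Sigma) : ℝ := ⨆ n, D.lamComp α n 0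

/-- Upper endpoint of the fibre over `α`. -/
noncomputable def fhi (D : FAData) (α : D.Sigma) : ℝ := ⨅ n, D.lamComp α n 1

/-- Affine parametrization of the fibre over `α`. -/
noncomputable def ff (D : FAData) (α : D.Sigma) (z : ℝ) : ℝ :=
  flo D α + z * (fhi D α - flo D α)

lemma aux_lo_mono (D : FAData) (α : D.Sigma) : Monotone fun n => D.lamComp α n 0 := by
  apply monotone_nat_of_le_succ
  intro n
  rw [aux_lamComp_succ]
  exact aux_lamComp_mono D α n (aux_lam_mem D n (α n) ⟨le_rfl, zero_le_one⟩).1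

lemma aux_hi_anti (D : FAData) (α : D.Sigma) : Antitone fun n => D.lamComp α n 1 := by
  apply antitone_nat_of_succ_le
  intro n
  rw [aux_lamComp_succ]
  exact aux_lamComp_mono D α n (aux_lam_mem D n (α n) ⟨zero_le_one, le_rfl⟩).2

lemma aux_tendsto_lo (D : FAData) (α : D.Sigma) :
    Tendsto (fun n => D.lamComp α n 0) atTop (𝓝 (flo D α)) := by
  apply tendsto_atTop_ciSup (aux_lo_mono D α)
  refine ⟨1, ?_⟩
  rintro x ⟨n, rfl⟩
  exact (aux_lamComp_mem D α n ⟨le_rfl, zero_le_one⟩).2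

lemma aux_tendsto_hi (D : FAData) (α : D.Sigma) :
    Tendsto (fun n => D.lamComp α n 1) atTop (𝓝 (fhi D α)) := by
  apply tendsto_atTop_ciInf (aux_hi_anti D α)
  refine ⟨0, ?_⟩
  rintro x ⟨n, rfl⟩
  exact (aux_lamComp_mem D α n ⟨zero_le_one, le_rfl⟩).1

lemma aux_tendsto_lamComp (D : FAData) (α : D.Sigma) (z : ℝ) :
    Tendsto (fun n => D.lamComp α n z) atTop (𝓝 (ff D α z)) := by
  have h := (aux_tendsto_lo D α).add
    (((aux_tendsto_hi D α).sub (aux_tendsto_lo D α)).const_mul z)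
  exact h.congr fun n => (aux_lamComp_affine D α n z).symm

lemma aux_mem_X_iff (D : FAData) (α : D.Sigma) (y : ℝ) :
    (α, y) ∈ D.X ↔ ∃ z ∈ Set.Icc (0:ℝ) 1, y = ff D α z := by
  constructor
  · rintro ⟨z, hz, hconv⟩
    exact ⟨z, hz, tendsto_nhds_unique hconv (aux_tendsto_lamComp D α z)⟩
  · rintro ⟨z, hz, rfl⟩
    exact ⟨z, hz, aux_tendsto_lamComp D α z⟩

end Aux
section Aux2

open FAData

lemma aux_carry_le_one (D : FAData) (α : D.Sigma) (n : ℕ) : D.carryIn α n ≤ 1 := by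
  cases n with
  | zero => exact le_refl 1
  | succ n =>
    show (if D.p n ≤ (α n).val + D.carryIn α n then 1 else 0) ≤ 1
    split <;> omega

lemma aux_carry_succ (D : FAData) (α : D.Sigma) (n : ℕ) :
    D.carryIn α (n+1) = if D.p n ≤ (α n).val + D.carryIn α n then 1 else 0 := rfl

lemma aux_addOne_val (D : FAData) (α : D.Sigma) (k : ℕ) :
    (D.addOne α k).val = ((α k).val + D.carryIn α k) % D.p k := rfl

lemma aux_mod_cancel {p a b c : ℕ} (hp : 0 < p) (ha : a < p) (hb : b < p) (hc : c ≤ 1)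
    (h : (a + c) % p = (b + c) % p) : a = b := by
  rcases Nat.lt_or_ge (a + c) p with h1 | h1 <;> rcases Nat.lt_or_ge (b + c) p with h2 | h2
  · rw [Nat.mod_eq_of_lt h1, Nat.mod_eq_of_lt h2] at h; omega
  · have hb' : b + c = p := by omega
    rw [Nat.mod_eq_of_lt h1, hb', Nat.mod_self] at h; omega
  · have ha' : a + c = p := by omega
    rw [ha', Nat.mod_self, Nat.mod_eq_of_lt h2] at h; omega
  · omega

lemma aux_addOne_prefix (D : FAData) (α β : D.Sigma) (N : ℕ)
    (h : ∀ k ≤ N, D.addOne α k = D.addOne β k) : ∀ k ≤ N, α k = β k := by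
  have key : ∀ k, k ≤ N + 1 → D.carryIn α k = D.carryIn β k ∧ ∀ j < k, α j = β j := by
    intro k
    induction k with
    | zero => exact fun _ => ⟨rfl, fun j hj => absurd hj (Nat.not_lt_zero j)⟩
    | succ k ih =>
      intro hk
      obtain ⟨hc, hd⟩ := ih (by omega)
      have hk' : k ≤ N := by omega
      have hdig : α k = β k := by
        have h1 : ((α k).val + D.carryIn α k) % D.p k
            = ((β k).val + D.carryIn β k) % D.p k := by
          have := congrArg Fin.val (h k hk')
          rwa [aux_addOne_val, aux_addOne_val] at this
        rw [← hc] at h1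
        exact Fin.ext (aux_mod_cancel (by have := D.hp k; omega) (α k).isLt (β k).isLt
          (aux_carry_le_one D α k) h1)
      refine ⟨?_, fun j hj => ?_⟩
      · rw [aux_carry_succ, aux_carry_succ, hdig, hc]
      · rcases Nat.lt_or_ge j k with hjk | hjk
        · exact hd j hjk
        · have : j = k := by omega
          rw [this]; exact hdig
  intro k hk
  exact (key (k+1) (by omega)).2 k (Nat.lt_succ_self k)

lemma aux_addOne_iter_prefix (D : FAData) (m : ℕ) :
    ∀ (α β : D.Sigma) (N : ℕ),
      (∀ k ≤ N, D.addOne^[m] α k = D.addOne^[m] β k) → ∀ k ≤ N, α k = β k := by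
  induction m with
  | zero => intro α β N h; simpa using h
  | succ m ih =>
    intro α β N h
    have h' : ∀ k ≤ N, D.addOne^[m] (D.addOne α) k = D.addOne^[m] (D.addOne β) k := by
      intro k hk
      have := h k hk
      rwa [Function.iterate_succ_apply, Function.iterate_succ_apply] at this
    exact aux_addOne_prefix D α β N (ih (D.addOne α) (D.addOne β) N h')

end Aux2
section Aux3

open FAData

lemma aux_T_apply (S : FASystem) (α : S.toFAData.Sigma) (z : ℝ) (hz : z ∈ Set.Icc (0:ℝ) 1)
    (q : S.toFAData.X) (hq : (q : S.toFAData.Sigma × ℝ) = (α, ff S.toFAData α z)) :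
    (S.T q : S.toFAData.Sigma × ℝ)
      = (S.toFAData.addOne α, ff S.toFAData (S.toFAData.addOne α) z) := by
  have hmem : (α, ff S.toFAData α z) ∈ S.toFAData.X :=
    (aux_mem_X_iff S.toFAData α _).2 ⟨z, hz, rfl⟩
  have hmain := S.hT α z _ _ hz (aux_tendsto_lamComp S.toFAData α z)
    (aux_tendsto_lamComp S.toFAData (S.toFAData.addOne α) z) hmem
  have hq' : q = ⟨(α, ff S.toFAData α z), hmem⟩ := Subtype.ext hq
  rw [hq']
  exact hmain

lemma aux_T_iter (S : FASystem) (m : ℕ) :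
    ∀ (α : S.toFAData.Sigma) (z : ℝ), z ∈ Set.Icc (0:ℝ) 1 →
      ∀ (q : S.toFAData.X), (q : S.toFAData.Sigma × ℝ) = (α, ff S.toFAData α z) →
      (S.T^[m] q : S.toFAData.Sigma × ℝ)
        = (S.toFAData.addOne^[m] α, ff S.toFAData (S.toFAData.addOne^[m] α) z) := by
  induction m with
  | zero => intro α z hz q hq; simpa using hq
  | succ m ih =>
    intro α z hz q hq
    rw [Function.iterate_succ_apply, Function.iterate_succ_apply]
    exact ih (S.toFAData.addOne α) z hz (S.T q) (aux_T_apply S α z hz q hq)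

end Aux3
/-- For an idempotent `f ∈ J(X)` and `α ∈ Σ`, either `f` restricts
to the identity on the fibre `L_α`, or `f(L_α)` is a single point `(α,z) ∈ L_α`. -/
theorem floyd_auslander_idempotent_on_fibre (S : FASystem)
    (f : S.toFAData.X → S.toFAData.X) (hf : f ∈ S.J) (α : S.toFAData.Sigma) :
    (∀ q : S.toFAData.X, (q : S.toFAData.Sigma × ℝ).1 = α → f q = q) ∨
    (∃ z : ℝ, (α, z) ∈ S.toFAData.X ∧
      ∀ q : S.toFAData.X, (q : S.toFAData.Sigma × ℝ).1 = α →
        (f q : S.toFAData.Sigma × ℝ) = (α, z)) := by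
  obtain ⟨hfE, hff⟩ := hf
  obtain ⟨u, hru, hu⟩ := mem_closure_iff_ultrafilter.1 hfE
  set g : ℕ → (S.toFAData.X → S.toFAData.X) := fun n => S.T^[n+1] with hg
  have hne : (Filter.comap g ↑u).NeBot := by
    apply Filter.comap_neBot
    intro t ht
    have h1 : t ∩ Set.range g ∈ u := Filter.inter_mem ht hru
    obtain ⟨x, hxt, n, rfl⟩ := Filter.nonempty_of_mem h1
    exact ⟨n, hxt⟩
  haveI := hne
  set V : Ultrafilter ℕ := Ultrafilter.of (Filter.comap g ↑u) with hVdef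
  have hV : Tendsto g ↑V (𝓝 f) :=
    le_trans (Filter.map_mono (Ultrafilter.of_le _)) (le_trans Filter.map_comap_le hu)
  have hconv : ∀ q, Tendsto (fun n => g n q) ↑V (𝓝 (f q)) := fun q => tendsto_pi_nhds.1 hV q
  -- first-coordinate limits
  have hfst : ∀ (γ : S.toFAData.Sigma) (q : S.toFAData.X) (z : ℝ), z ∈ Set.Icc (0:ℝ) 1 →
      (q : S.toFAData.Sigma × ℝ) = (γ, ff S.toFAData γ z) →
      Tendsto (fun n => S.toFAData.addOne^[n+1] γ) ↑V (𝓝 ((f q : S.toFAData.Sigma × ℝ).1)) := by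
    intro γ q z hz hq
    have h2 : Tendsto (fun n => ((g n q : S.toFAData.X) : S.toFAData.Sigma × ℝ))
        ↑V (𝓝 ((f q : S.toFAData.Sigma × ℝ))) :=
      (continuous_subtype_val.tendsto _).comp (hconv q)
    have h3 := (continuous_fst.tendsto _).comp h2
    refine h3.congr fun n => ?_
    simp only [hg, Function.comp_apply]
    rw [aux_T_iter S (n+1) γ z hz q hq]
  -- second-coordinate limits
  have hsnd : ∀ (γ : S.toFAData.Sigma) (q : S.toFAData.X) (z : ℝ), z ∈ Set.Icc (0:ℝ) 1 →
      (q : S.toFAData.Sigma × ℝ) = (γ, ff S.toFAData γ z) →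
      Tendsto (fun n => ff S.toFAData (S.toFAData.addOne^[n+1] γ) z) ↑V
        (𝓝 ((f q : S.toFAData.Sigma × ℝ).2)) := by
    intro γ q z hz hq
    have h2 : Tendsto (fun n => ((g n q : S.toFAData.X) : S.toFAData.Sigma × ℝ))
        ↑V (𝓝 ((f q : S.toFAData.Sigma × ℝ))) :=
      (continuous_subtype_val.tendsto _).comp (hconv q)
    have h3 := (continuous_snd.tendsto _).comp h2
    refine h3.congr fun n => ?_
    simp only [hg, Function.comp_apply]
    rw [aux_T_iter S (n+1) γ z hz q hq]
  -- the two extreme points of the fibre over α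
  have hmem0 : (α, ff S.toFAData α 0) ∈ S.toFAData.X :=
    (aux_mem_X_iff S.toFAData α _).2 ⟨0, ⟨le_rfl, zero_le_one⟩, rfl⟩
  have hmem1 : (α, ff S.toFAData α 1) ∈ S.toFAData.X :=
    (aux_mem_X_iff S.toFAData α _).2 ⟨1, ⟨zero_le_one, le_rfl⟩, rfl⟩
  set q0 : S.toFAData.X := ⟨(α, ff S.toFAData α 0), hmem0⟩ with hq0def
  set q1 : S.toFAData.X := ⟨(α, ff S.toFAData α 1), hmem1⟩ with hq1def
  set β := ((f q0 : S.toFAData.Sigma × ℝ)).1 with hβ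
  have hβ1 := hfst α q0 0 ⟨le_rfl, zero_le_one⟩ rfl
  rw [← hβ] at hβ1
  -- f q0 lies in the fibre over β; use idempotency to see β is fixed
  obtain ⟨w, hw, hwe⟩ := (aux_mem_X_iff S.toFAData β ((f q0 : S.toFAData.Sigma × ℝ)).2).1
    (by rw [hβ]; exact (f q0).2)
  have hfq0val : ((f q0 : S.toFAData.Sigma × ℝ)) = (β, ff S.toFAData β w) :=
    Prod.ext_iff.2 ⟨hβ.symm, hwe⟩
  have hβ2 := hfst β (f q0) w hw hfq0val
  have hffq0 : f (f q0) = f q0 := congrFun hff q0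
  rw [hffq0, ← hβ] at hβ2
  -- coordinatewise eventual equality
  have hevent : ∀ (δ : S.toFAData.Sigma),
      Tendsto (fun n => S.toFAData.addOne^[n+1] δ) ↑V (𝓝 β) → ∀ k : ℕ,
      ∀ᶠ n in ↑V, S.toFAData.addOne^[n+1] δ k = β k := by
    intro δ hδ k
    have h1 : Tendsto (fun n => S.toFAData.addOne^[n+1] δ k) ↑V (𝓝 (β k)) :=
      ((continuous_apply k).tendsto _).comp hδ
    rwa [nhds_discrete, tendsto_pure] at h1
  have hαβ : α = β := by
    funext k
    have hall : ∀ᶠ n in ↑V, ∀ j ∈ Finset.range (k+1),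
        (S.toFAData.addOne^[n+1] α j = β j ∧ S.toFAData.addOne^[n+1] β j = β j) := by
      rw [Filter.eventually_all_finset]
      intro j _
      exact (hevent α hβ1 j).and (hevent β hβ2 j)
    obtain ⟨n, hn⟩ := hall.exists
    refine aux_addOne_iter_prefix S.toFAData (n+1) α β k (fun j hj => ?_) k le_rfl
    obtain ⟨h1, h2⟩ := hn j (Finset.mem_range.2 (Nat.lt_succ_of_le hj))
    rw [h1, h2]
  -- second coordinates
  set b := ((f q0 : S.toFAData.Sigma × ℝ)).2 with hbdef
  set c := ((f q1 : S.toFAData.Sigma × ℝ)).2 with hcdef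
  have hb_t := hsnd α q0 0 ⟨le_rfl, zero_le_one⟩ rfl
  have hc_t := hsnd α q1 1 ⟨zero_le_one, le_rfl⟩ rfl
  rw [← hbdef] at hb_t
  rw [← hcdef] at hc_t
  have hz_t : ∀ z : ℝ, Tendsto (fun n => ff S.toFAData (S.toFAData.addOne^[n+1] α) z) ↑V
      (𝓝 (b + z * (c - b))) := by
    intro z
    have h := hb_t.add ((hc_t.sub hb_t).const_mul z)
    refine h.congr fun n => ?_
    simp only [ff]
    ring
  -- the key formula for f on the fibre over α
  have key : ∀ (q : S.toFAData.X) (z : ℝ), z ∈ Set.Icc (0:ℝ) 1 →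
      (q : S.toFAData.Sigma × ℝ) = (α, ff S.toFAData α z) →
      ((f q : S.toFAData.Sigma × ℝ)) = (α, b + z * (c - b)) := by
    intro q z hz hq
    refine Prod.ext_iff.2 ⟨?_, ?_⟩
    · exact (tendsto_nhds_unique (hfst α q z hz hq) hβ1).trans hαβ.symm
    · exact tendsto_nhds_unique (hsnd α q z hz hq) (hz_t z)
  -- representation of fibre points
  have hrep : ∀ q : S.toFAData.X, (q : S.toFAData.Sigma × ℝ).1 = α →
      ∃ z ∈ Set.Icc (0:ℝ) 1, (q : S.toFAData.Sigma × ℝ) = (α, ff S.toFAData α z) := by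
    intro q hq1
    have hmem : (α, (q : S.toFAData.Sigma × ℝ).2) ∈ S.toFAData.X := by
      rw [← hq1]; exact q.2
    obtain ⟨z, hz, hze⟩ := (aux_mem_X_iff S.toFAData α _).1 hmem
    exact ⟨z, hz, Prod.ext_iff.2 ⟨hq1, hze⟩⟩
  by_cases hcb : c = b
  · -- constant case
    right
    have h0 := key q0 0 ⟨le_rfl, zero_le_one⟩ rfl
    refine ⟨b, ?_, ?_⟩
    · have hval : ((f q0 : S.toFAData.Sigma × ℝ)) = (α, b) := by rw [h0]; norm_num
      rw [← hval]; exact (f q0).2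
    · intro q hq1
      obtain ⟨z, hz, hq⟩ := hrep q hq1
      rw [key q z hz hq, hcb]
      norm_num
  · -- identity case
    left
    have hcb' : c - b ≠ 0 := sub_ne_zero.mpr hcb
    -- at q0
    have h0 := key q0 0 ⟨le_rfl, zero_le_one⟩ rfl
    have hfst0 : ((f q0 : S.toFAData.Sigma × ℝ)).1 = α := by rw [h0]
    obtain ⟨w0, hw0I, hw0e⟩ := (aux_mem_X_iff S.toFAData α ((f q0 : S.toFAData.Sigma × ℝ)).2).1
      (by rw [← hfst0]; exact (f q0).2)
    have hkey0 := key (f q0) w0 hw0I (Prod.ext_iff.2 ⟨hfst0, hw0e⟩)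
    have hffq0' : f (f q0) = f q0 := congrFun hff q0
    rw [hffq0'] at hkey0
    have hsnd0 : ((f q0 : S.toFAData.Sigma × ℝ)).2 = b + w0 * (c - b) :=
      congrArg Prod.snd hkey0
    rw [← hbdef] at hsnd0
    have hw0 : w0 = 0 := by
      rcases mul_eq_zero.1 (by linarith : w0 * (c - b) = 0) with h | h
      · exact h
      · exact absurd h hcb'
    have hbv : b = ff S.toFAData α 0 := by
      rw [hw0] at hw0e
      rw [hbdef]; exact hw0e
    -- at q1
    have h1 := key q1 1 ⟨zero_le_one, le_rfl⟩ rfl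
    have hfst1 : ((f q1 : S.toFAData.Sigma × ℝ)).1 = α := by rw [h1]
    obtain ⟨w1, hw1I, hw1e⟩ := (aux_mem_X_iff S.toFAData α ((f q1 : S.toFAData.Sigma × ℝ)).2).1
      (by rw [← hfst1]; exact (f q1).2)
    have hkey1 := key (f q1) w1 hw1I (Prod.ext_iff.2 ⟨hfst1, hw1e⟩)
    have hffq1' : f (f q1) = f q1 := congrFun hff q1
    rw [hffq1'] at hkey1
    have hsnd1 : c = b + w1 * (c - b) := by
      rw [hcdef]; exact congrArg Prod.snd hkey1
    have hw1 : w1 = 1 := by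
      have hzz : (w1 - 1) * (c - b) = 0 := by linear_combination -hsnd1
      rcases mul_eq_zero.1 hzz with h | h
      · linarith
      · exact absurd h hcb'
    have hcv : c = ff S.toFAData α 1 := by
      rw [hw1] at hw1e
      rw [hcdef]; exact hw1e
    intro q hq1
    obtain ⟨z, hz, hq⟩ := hrep q hq1
    apply Subtype.ext
    rw [key q z hz hq, hq]
    refine Prod.ext_iff.2 ⟨rfl, ?_⟩
    rw [hbv, hcv]
    simp only [ff]
    ring
end
end
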